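/- arXiv:2305.01575 — 11 statements merged into one kernel-verified Lean document; each statement's English description precedes it below -/
import Mathlib

section
/- Let λ ∈ (0, π/4) and define x₁(y) = (1/2)·arcsin( cos λ · sin² y / √(sin² y − sin² λ) ) for arcsin(tan λ) < y < π/2. Then x₁ is strictly decreasing on [arcsin(tan λ), arcsin(√2 · sin λ)] and strictly increasing on [arcsin(√2 · sin λ), π/2], with x₁(arcsin(tan λ)) = π/4, x₁(π/2) = π/4, and x₁(arcsin(√2 · sin λ)) = λ. -/
/-!
Put `t = sin² y`, which increases on `[0, π/2]`, and `c = cos λ`, `s = sin λ`. Then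
`sin (2 x₁) = c t / √(t - s²) = c √(t² / (t - s²))`, and `t ↦ t² / (t - a)` decreases on
`(a, 2a]` and increases on `[2a, ∞)`: the difference `v² (u - a) - u² (v - a)` factors as
`(v - u) ((u - a) (v - a) - a²)`. The endpoints `y = arcsin (tan λ), arcsin (√2 sin λ), π/2`
correspond to `t = s² / c², 2 s², 1`, where the argument of `arcsin` is `1`, `sin 2λ` and `1`.
-/

open Real Set

lemma strictAntiOn_sq_div_sub {a : ℝ} (ha : 0 < a) :
    StrictAntiOn (fun t => t ^ 2 / (t - a)) (Ioc a (2 * a)) := by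
  rintro u ⟨hau, -⟩ v ⟨hav, hv⟩ huv
  have hprod : (u - a) * (v - a) < a ^ 2 := by nlinarith
  rw [div_lt_div_iff₀ (sub_pos.2 hav) (sub_pos.2 hau)]
  linear_combination mul_pos (sub_pos.2 huv) (sub_pos.2 hprod)

lemma strictMonoOn_sq_div_sub {a : ℝ} (ha : 0 < a) :
    StrictMonoOn (fun t => t ^ 2 / (t - a)) (Ici (2 * a)) := by
  rintro u (hu : 2 * a ≤ u) v (hv : 2 * a ≤ v) huv
  have hprod : a ^ 2 < (u - a) * (v - a) := by nlinarith
  rw [div_lt_div_iff₀ (by linarith) (by linarith)]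
  linear_combination mul_pos (sub_pos.2 huv) (sub_pos.2 hprod)

noncomputable def arcsinArg (c s t : ℝ) : ℝ := c * t / √(t - s ^ 2)

section

variable {c s : ℝ}

lemma arcsinArg_eq_mul_sqrt (c : ℝ) {t : ℝ} (ht : 0 ≤ t) :
    arcsinArg c s t = c * √(t ^ 2 / (t - s ^ 2)) := by
  rw [arcsinArg, mul_div_assoc, sqrt_div (sq_nonneg t), sqrt_sq ht]

lemma strictAntiOn_arcsinArg (hc : 0 < c) (hs : s ≠ 0) :
    StrictAntiOn (arcsinArg c s) (Ioc (s ^ 2) (2 * s ^ 2)) := by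
  intro u hu v hv huv
  have hv0 : 0 < v - s ^ 2 := sub_pos.2 hv.1
  rw [arcsinArg_eq_mul_sqrt c ((sq_nonneg s).trans hu.1.le),
    arcsinArg_eq_mul_sqrt c ((sq_nonneg s).trans hv.1.le)]
  exact mul_lt_mul_of_pos_left (sqrt_lt_sqrt (div_nonneg (sq_nonneg v) hv0.le)
    (strictAntiOn_sq_div_sub (by positivity) hu hv huv)) hc

lemma strictMonoOn_arcsinArg (hc : 0 < c) (hs : s ≠ 0) :
    StrictMonoOn (arcsinArg c s) (Ici (2 * s ^ 2)) := by
  intro u (hu : 2 * s ^ 2 ≤ u) v (hv : 2 * s ^ 2 ≤ v) huv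
  have hs2 : 0 < s ^ 2 := by positivity
  rw [arcsinArg_eq_mul_sqrt c (by linarith), arcsinArg_eq_mul_sqrt c (by linarith)]
  exact mul_lt_mul_of_pos_left (sqrt_lt_sqrt (div_nonneg (sq_nonneg u) (by linarith))
    (strictMonoOn_sq_div_sub hs2 hu hv huv)) hc

/- `1 - (c t)² / (t - s²) = (1 - t) (c² t - s²) / (t - s²)` when `c² + s² = 1`. -/
lemma arcsinArg_mem_Icc (hc : 0 ≤ c) (hcs : c ^ 2 + s ^ 2 = 1) {t : ℝ} (ht : s ^ 2 < t)
    (hlo : s ^ 2 ≤ c ^ 2 * t) (hhi : t ≤ 1) : arcsinArg c s t ∈ Icc (-1) 1 := by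
  have ht0 : 0 ≤ t := (sq_nonneg s).trans ht.le
  refine ⟨neg_one_lt_zero.le.trans (by unfold arcsinArg; positivity), ?_⟩
  rw [arcsinArg, div_le_one (sqrt_pos.2 (sub_pos.2 ht))]
  apply le_sqrt_of_sq_le
  linear_combination mul_nonneg (sub_nonneg.2 hhi) (sub_nonneg.2 hlo) + t * hcs

lemma arcsinArg_sq_div_sq (hc : 0 < c) (hs : s ≠ 0) (hcs : c ^ 2 + s ^ 2 = 1) :
    arcsinArg c s (s ^ 2 / c ^ 2) = 1 := by
  have hsq : s ^ 2 / c ^ 2 - s ^ 2 = (s ^ 2 / c) ^ 2 := by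
    field_simp
    linear_combination -hcs
  rw [arcsinArg, hsq, sqrt_sq (by positivity)]
  field_simp

lemma arcsinArg_one (hc : 0 < c) (hcs : c ^ 2 + s ^ 2 = 1) : arcsinArg c s 1 = 1 := by
  rw [arcsinArg, show 1 - s ^ 2 = c ^ 2 by linarith, sqrt_sq hc.le, mul_one, div_self hc.ne']

lemma arcsinArg_two_mul_sq (c : ℝ) (hs : 0 < s) : arcsinArg c s (2 * s ^ 2) = 2 * s * c := by
  rw [arcsinArg, show 2 * s ^ 2 - s ^ 2 = s ^ 2 by ring, sqrt_sq hs.le]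
  field_simp

lemma strictAntiOn_arcsin_arcsinArg (hc : 0 < c) (hs : s ≠ 0) (hcs : c ^ 2 + s ^ 2 = 1) :
    StrictAntiOn (fun t => arcsin (arcsinArg c s t)) (Icc (s ^ 2 / c ^ 2) (2 * s ^ 2)) := by
  have hlt : s ^ 2 < s ^ 2 / c ^ 2 := by
    rw [lt_div_iff₀ (by positivity)]
    nlinarith [pow_pos hc 2, pow_pos (abs_pos.2 hs) 2, sq_abs s]
  refine strictMonoOn_arcsin.comp_strictAntiOn
    ((strictAntiOn_arcsinArg hc hs).mono fun t ht => ⟨hlt.trans_le ht.1, ht.2⟩) ?_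
  rintro t ⟨hlo, hhi⟩
  have hlo' : s ^ 2 ≤ c ^ 2 * t := by rwa [div_le_iff₀' (by positivity)] at hlo
  have hcs2 : 1 ≤ 2 * c ^ 2 := by nlinarith
  exact arcsinArg_mem_Icc hc.le hcs (hlt.trans_le hlo) hlo' (by nlinarith)

lemma strictMonoOn_arcsin_arcsinArg (hc : 0 < c) (hs : s ≠ 0) (hcs : c ^ 2 + s ^ 2 = 1) :
    StrictMonoOn (fun t => arcsin (arcsinArg c s t)) (Icc (2 * s ^ 2) 1) := by
  refine strictMonoOn_arcsin.comp
    ((strictMonoOn_arcsinArg hc hs).mono Icc_subset_Ici_self) ?_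
  rintro t ⟨hlo, hhi⟩
  have hs2 : 0 < s ^ 2 := by positivity
  exact arcsinArg_mem_Icc hc.le hcs (by linarith) (by nlinarith) hhi

end

lemma strictMonoOn_sin_sq : StrictMonoOn (fun y => sin y ^ 2) (Icc 0 (π / 2)) :=
  fun _ hy _ hz hyz => pow_lt_pow_left₀
    (strictMonoOn_sin ⟨by linarith [hy.1, pi_pos], hy.2⟩ ⟨by linarith [hz.1, pi_pos], hz.2⟩ hyz)
    (sin_nonneg_of_nonneg_of_le_pi hy.1 (by linarith [hy.2, pi_pos])) two_ne_zero

lemma mapsTo_sin_sq_Icc {p q : ℝ} (hp : 0 ≤ p) (hq : q ≤ π / 2) :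
    MapsTo (fun y => sin y ^ 2) (Icc p q) (Icc (sin p ^ 2) (sin q ^ 2)) :=
  (strictMonoOn_sin_sq.monotoneOn.mono (Icc_subset_Icc hp hq)).mapsTo_Icc

lemma sin_lt_cos_of_lt_pi_div_four {l : ℝ} (hl : -(π / 2) < l) (hl4 : l < π / 4) :
    sin l < cos l := by
  have hc : 0 < cos l := cos_pos_of_mem_Ioo ⟨hl, by linarith [pi_pos]⟩
  rw [← div_lt_one hc, ← tan_eq_sin_div_cos, ← tan_pi_div_four]
  exact tan_lt_tan_of_lt_of_lt_pi_div_two hl (by linarith [pi_pos]) hl4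

/-- Monotonicity and boundary values of the function `x₁ˢ` from the paper. -/
theorem stmt0 (l : ℝ) (hl : 0 < l) (hl4 : l < π / 4) :
    let x1 : ℝ → ℝ := fun y =>
      (1 / 2) * arcsin (cos l * sin y ^ 2 / Real.sqrt (sin y ^ 2 - sin l ^ 2))
    StrictAntiOn x1 (Icc (arcsin (tan l)) (arcsin (Real.sqrt 2 * sin l))) ∧
    StrictMonoOn x1 (Icc (arcsin (Real.sqrt 2 * sin l)) (π / 2)) ∧
    x1 (arcsin (tan l)) = π / 4 ∧
    x1 (π / 2) = π / 4 ∧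
    x1 (arcsin (Real.sqrt 2 * sin l)) = l := by
  intro x1
  have hx1 : ∀ y, x1 y = 1 / 2 * arcsin (arcsinArg (cos l) (sin l) (sin y ^ 2)) := fun _ => rfl
  have hc : 0 < cos l := cos_pos_of_mem_Ioo ⟨by linarith [pi_pos], by linarith⟩
  have hs : 0 < sin l := sin_pos_of_pos_of_lt_pi hl (by linarith [pi_pos])
  have hcs : cos l ^ 2 + sin l ^ 2 = 1 := cos_sq_add_sin_sq l
  have hsc : sin l < cos l := sin_lt_cos_of_lt_pi_div_four (by linarith [pi_pos]) hl4
  have htan : 0 < tan l := tan_pos_of_pos_of_lt_pi_div_two hl (by linarith)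
  have htan1 : tan l < 1 := by rwa [tan_eq_sin_div_cos, div_lt_one hc]
  have hr : √2 * sin l < 1 := by
    rw [← sq_lt_one_iff₀ (by positivity), mul_pow, sq_sqrt zero_le_two]
    nlinarith
  have hA : sin (arcsin (tan l)) ^ 2 = sin l ^ 2 / cos l ^ 2 := by
    rw [sin_arcsin (by linarith) htan1.le, tan_eq_sin_div_cos, div_pow]
  have hB : sin (arcsin (√2 * sin l)) ^ 2 = 2 * sin l ^ 2 := by
    rw [sin_arcsin (by nlinarith [sqrt_nonneg 2]) hr.le, mul_pow, sq_sqrt zero_le_two]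
  have hA0 : 0 ≤ arcsin (tan l) := arcsin_nonneg.2 htan.le
  have hB0 : 0 ≤ arcsin (√2 * sin l) := arcsin_nonneg.2 (by positivity)
  have hB1 : arcsin (√2 * sin l) ≤ π / 2 := arcsin_le_pi_div_two _
  have hhalf : StrictMono fun r : ℝ => 1 / 2 * r := strictMono_mul_left_of_pos one_half_pos
  refine ⟨hhalf.comp_strictAntiOn ((strictAntiOn_arcsin_arcsinArg hc hs.ne' hcs).comp_strictMonoOn
      (strictMonoOn_sin_sq.mono (Icc_subset_Icc hA0 hB1)) ?_),
    hhalf.comp_strictMonoOn ((strictMonoOn_arcsin_arcsinArg hc hs.ne' hcs).comp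
      (strictMonoOn_sin_sq.mono (Icc_subset_Icc hB0 le_rfl)) ?_), ?_, ?_, ?_⟩
  · simpa only [hA, hB] using mapsTo_sin_sq_Icc hA0 hB1
  · simpa only [hB, sin_pi_div_two, one_pow] using mapsTo_sin_sq_Icc hB0 le_rfl
  · rw [hx1, hA, arcsinArg_sq_div_sq hc hs.ne' hcs, arcsin_one]; ring
  · rw [hx1, sin_pi_div_two, one_pow, arcsinArg_one hc hcs, arcsin_one]; ring
  · rw [hx1, hB, arcsinArg_two_mul_sq _ hs, ← sin_two_mul, arcsin_sin (by linarith) (by linarith)]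
    ring
end

section
/- Let 0 < λ. The Euclidean isosceles triangle T^e(y) with base 2y and legs 2·x^e(y), where x^e(y) = y²/(2√(y² − λ²)), contains its circumcenter if and only if λ < y ≤ √2·λ. -/
/-!
For an isosceles triangle with apex `p₀`, legs `b` and base `a`, the point
`p₀ + w • ((p₁ - p₀) + (p₂ - p₀))` with `w = b² / (4b² - a²)` is equidistant from the three
vertices, so the circumcenter has barycentric coordinates `(1 - 2w, w, w)`. It lies in the
closed triangle iff `1 - 2w ≥ 0`, i.e. iff `a² ≤ 2b²` (the apex angle is not obtuse). For
`T^e(y)` this reads `2(y² - λ²) ≤ y²`, i.e. `y ≤ √2·λ`.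
-/

open RealInnerProductSpace in
lemma norm_smul_add_sub_left_eq {V : Type*} [NormedAddCommGroup V] [InnerProductSpace ℝ V]
    {u v : V} {w : ℝ} (huv : ‖u‖ = ‖v‖) (hw : w * ‖u + v‖ ^ 2 = ‖u‖ ^ 2) :
    ‖w • (u + v) - u‖ = ‖w • (u + v)‖ := by
  have hsum : ‖u + v‖ ^ 2 = 2 * ⟪u + v, u⟫ := by
    rw [norm_add_sq_real, inner_add_left, real_inner_self_eq_norm_sq, real_inner_comm, ← huv]
    ring
  rw [← sq_eq_sq₀ (norm_nonneg _) (norm_nonneg _), norm_sub_sq_real, real_inner_smul_left]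
  rw [hsum] at hw
  linarith

lemma sum_vec_one_sub_two_mul_eq_one (w : ℝ) : ∑ i, ![1 - 2 * w, w, w] i = 1 := by
  simp only [Fin.sum_univ_three, Matrix.cons_val]
  ring

namespace Affine.Simplex

variable {V P : Type*} [NormedAddCommGroup V] [InnerProductSpace ℝ V] [MetricSpace P]
  [NormedAddTorsor V P]

lemma dist_points_one_two_lt (s : Simplex ℝ P 2) :
    dist (s.points 1) (s.points 2) <
      dist (s.points 0) (s.points 1) + dist (s.points 0) (s.points 2) := by
  rw [dist_comm (s.points 0), dist_lt_dist_add_dist_iff]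
  exact s.independent.not_wbtw_of_injective 1 0 2 (by decide)

theorem circumcenter_eq_affineCombination_of_dist_eq (s : Simplex ℝ P 2)
    (h : dist (s.points 0) (s.points 1) = dist (s.points 0) (s.points 2)) {w : ℝ}
    (hw : w * (4 * dist (s.points 0) (s.points 1) ^ 2 - dist (s.points 1) (s.points 2) ^ 2) =
      dist (s.points 0) (s.points 1) ^ 2) :
    s.circumcenter = Finset.univ.affineCombination ℝ s.points ![1 - 2 * w, w, w] := by
  set u := s.points 1 -ᵥ s.points 0
  set v := s.points 2 -ᵥ s.points 0
  have hu : ‖u‖ = dist (s.points 0) (s.points 1) := (dist_eq_norm_vsub' V _ _).symm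
  have hv : ‖v‖ = dist (s.points 0) (s.points 1) := h ▸ (dist_eq_norm_vsub' V _ _).symm
  have huv : ‖u - v‖ = dist (s.points 1) (s.points 2) := by
    rw [vsub_sub_vsub_cancel_right, dist_eq_norm_vsub V]
  have hnorm : w * ‖u + v‖ ^ 2 = dist (s.points 0) (s.points 1) ^ 2 := by
    have := parallelogram_law_with_norm ℝ u v
    rw [hu, hv, huv] at this
    rw [← hw]
    congr 1
    linarith
  have hW := sum_vec_one_sub_two_mul_eq_one w
  have hc : Finset.univ.affineCombination ℝ s.points ![1 - 2 * w, w, w] =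
      w • (u + v) +ᵥ s.points 0 := by
    rw [Finset.affineCombination_eq_weightedVSubOfPoint_vadd_of_sum_eq_one _ _ _ hW (s.points 0),
      Finset.weightedVSubOfPoint_apply, Fin.sum_univ_three]
    simp [u, v, smul_add]
  refine (s.eq_circumcenter_of_dist_eq (affineCombination_mem_affineSpan hW _)
    (r := ‖w • (u + v)‖) fun i => ?_).symm
  rw [hc, dist_eq_norm_vsub V, vsub_vadd_eq_vsub_sub]
  fin_cases i
  · rw [Fin.zero_eta, vsub_self, zero_sub, norm_neg]
  · rw [norm_sub_rev]
    exact norm_smul_add_sub_left_eq (hu.trans hv.symm) (by rwa [hu])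
  · rw [norm_sub_rev, add_comm]
    exact norm_smul_add_sub_left_eq (hv.trans hu.symm) (by rwa [add_comm, hv])

theorem circumcenter_mem_closedInterior_iff_of_dist_eq (s : Simplex ℝ P 2)
    (h : dist (s.points 0) (s.points 1) = dist (s.points 0) (s.points 2)) :
    s.circumcenter ∈ s.closedInterior ↔
      dist (s.points 1) (s.points 2) ^ 2 ≤ 2 * dist (s.points 0) (s.points 1) ^ 2 := by
  set b := dist (s.points 0) (s.points 1)
  set a := dist (s.points 1) (s.points 2)
  have hab : a < 2 * b := by linarith [s.dist_points_one_two_lt]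
  have hD : 0 < 4 * b ^ 2 - a ^ 2 := by nlinarith [dist_nonneg (x := s.points 1) (y := s.points 2)]
  set w := b ^ 2 / (4 * b ^ 2 - a ^ 2)
  have hw : w * (4 * b ^ 2 - a ^ 2) = b ^ 2 := div_mul_cancel₀ _ hD.ne'
  have hw0 : 0 ≤ w := by positivity
  rw [s.circumcenter_eq_affineCombination_of_dist_eq h hw,
    affineCombination_mem_closedInterior_iff (sum_vec_one_sub_two_mul_eq_one w)]
  have hsign : (1 - 2 * w) * (4 * b ^ 2 - a ^ 2) = 2 * b ^ 2 - a ^ 2 := by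
    linear_combination (-2) * hw
  simp only [Fin.forall_fin_succ, Set.mem_Icc, Matrix.cons_val_zero, Matrix.cons_val_succ,
    IsEmpty.forall_iff, and_true]
  constructor
  · rintro ⟨⟨h0, -⟩, -⟩
    nlinarith [mul_nonneg h0 hD.le]
  · intro hab2
    have h0 : 0 ≤ 1 - 2 * w := (mul_nonneg_iff_of_pos_right hD).mp (by linarith)
    refine ⟨⟨h0, ?_⟩, ⟨hw0, ?_⟩, hw0, ?_⟩ <;> linarith

end Affine.Simplex

lemma sq_two_mul_le_two_mul_sq_iff {l y : ℝ} (hl : 0 < l) (hy : l < y) :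
    (2 * y) ^ 2 ≤ 2 * (2 * (y ^ 2 / (2 * √(y ^ 2 - l ^ 2)))) ^ 2 ↔ y ≤ √2 * l := by
  have hy0 : 0 < y := hl.trans hy
  have hyl : 0 < y ^ 2 - l ^ 2 := by nlinarith
  have hleg : (2 * (y ^ 2 / (2 * √(y ^ 2 - l ^ 2)))) ^ 2 = y ^ 4 / (y ^ 2 - l ^ 2) := by
    rw [mul_div_assoc', mul_div_mul_left _ _ two_ne_zero, div_pow, Real.sq_sqrt hyl.le]
    ring
  calc (2 * y) ^ 2 ≤ 2 * (2 * (y ^ 2 / (2 * √(y ^ 2 - l ^ 2)))) ^ 2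
      ↔ 2 * y ^ 2 * (2 * (y ^ 2 - l ^ 2)) ≤ 2 * y ^ 2 * y ^ 2 := by
        rw [hleg, mul_div_assoc', le_div_iff₀ hyl]
        ring_nf
    _ ↔ y ^ 2 ≤ 2 * l ^ 2 := by
        rw [mul_le_mul_iff_right₀ (by positivity)]
        constructor <;> intro h <;> linarith
    _ ↔ y ≤ √2 * l := by
        rw [show √2 * l = √(2 * l ^ 2) by rw [Real.sqrt_mul zero_le_two, Real.sqrt_sq hl.le],
          Real.le_sqrt hy0.le (by positivity)]

/-- The Euclidean isosceles triangle `T^e(y)` (base `2y`, legs `2·x^e(y)` with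
`x^e(y) = y²/(2√(y²−λ²))`) contains its circumcenter iff `λ < y ≤ √2·λ`. -/
theorem stmt5 (l y : ℝ) (hl : 0 < l) (hy : l < y)
    (s : Affine.Simplex ℝ (EuclideanSpace ℝ (Fin 2)) 2)
    (hbase : dist (s.points 1) (s.points 2) = 2 * y)
    (hleg1 : dist (s.points 0) (s.points 1) = 2 * (y ^ 2 / (2 * Real.sqrt (y ^ 2 - l ^ 2))))
    (hleg2 : dist (s.points 0) (s.points 2) = 2 * (y ^ 2 / (2 * Real.sqrt (y ^ 2 - l ^ 2)))) :
    s.circumcenter ∈ convexHull ℝ (Set.range s.points) ↔ y ≤ Real.sqrt 2 * l := by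
  rw [Affine.Simplex.convexHull_eq_closedInterior,
    s.circumcenter_mem_closedInterior_iff_of_dist_eq (hleg1.trans hleg2.symm), hbase, hleg1]
  exact sq_two_mul_le_two_mul_sq_iff hl hy
end

section
/- Let T be a triangle in the Euclidean plane with vertices a, b, c containing its circumcenter, and let ρ > 0. Suppose some line L separates the closed disks of radius ρ centered at a and b from the closed disk of radius ρ centered at c, with L disjoint from the interiors of all three disks. Then the line through the midpoints of [a,c] and [b,c] separates the disk of radius ρ centered at c from the disks of radius ρ centered at a and b, and is disjoint from the interiors of all three disks. -/
open Real Metric RealInnerProductSpace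

lemma hull3 {E : Type*} [AddCommGroup E] [Module ℝ E] {a b c o : E}
    (h : o ∈ convexHull ℝ ({a, b, c} : Set E)) :
    ∃ α β γ : ℝ, 0 ≤ α ∧ 0 ≤ β ∧ 0 ≤ γ ∧ α + β + γ = 1 ∧ α • a + β • b + γ • c = o := by
  rw [show ({a, b, c} : Set E) = insert a {b, c} from rfl,
    convexHull_insert ⟨b, by simp⟩, convexHull_pair] at h
  rw [mem_convexJoin] at h
  obtain ⟨x, hx, y, hy, ho⟩ := h
  rw [Set.mem_singleton_iff] at hx
  subst hx
  obtain ⟨p, q, hp, hq, hpq, rfl⟩ := hy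
  obtain ⟨u, v, hu, hv, huv, ho⟩ := ho
  refine ⟨u, v * p, v * q, hu, by positivity, by positivity, by nlinarith, ?_⟩
  rw [← ho]
  module

lemma nonobtuse {E : Type*} [NormedAddCommGroup E] [InnerProductSpace ℝ E] {a b c o : E}
    (hab : a ≠ b) (hac : a ≠ c)
    (h1 : dist o a = dist o b) (h2 : dist o a = dist o c)
    (ho : o ∈ convexHull ℝ ({a, b, c} : Set E)) :
    0 ≤ ⟪b - a, c - a⟫ := by
  obtain ⟨α, β, γ, hα, hβ, hγ, hsum, ho'⟩ := hull3 ho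
  have e1 : ⟪o - a, o - a⟫ = ⟪o - b, o - b⟫ := by
    rw [real_inner_self_eq_norm_sq, real_inner_self_eq_norm_sq, ← dist_eq_norm, ← dist_eq_norm, h1]
  have e2 : ⟪o - a, o - a⟫ = ⟪o - c, o - c⟫ := by
    rw [real_inner_self_eq_norm_sq, real_inner_self_eq_norm_sq, ← dist_eq_norm, ← dist_eq_norm, h2]
  have d1 : (0:ℝ) < ⟪b - a, b - a⟫ := by rw [real_inner_self_eq_norm_sq]; exact pow_pos (norm_pos_iff.mpr (sub_ne_zero.2 hab.symm)) 2
  have d2 : (0:ℝ) < ⟪c - a, c - a⟫ := by rw [real_inner_self_eq_norm_sq]; exact pow_pos (norm_pos_iff.mpr (sub_ne_zero.2 hac.symm)) 2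
  rw [← ho'] at e1 e2
  simp only [inner_sub_left, inner_sub_right, inner_add_left, inner_add_right,
    real_inner_smul_left, real_inner_smul_right, real_inner_comm] at e1 e2 d1 d2 ⊢
  by_contra hτ
  push_neg at hτ
  -- τ := ⟪b,c⟫ - ⟪a,b⟫ - ⟪a,c⟫ + ⟪a,a⟫ < 0
  have T1 : γ * (⟪b,c⟫ - ⟪a,b⟫ - ⟪a,c⟫ + ⟪a,a⟫)
      = (⟪b,b⟫ - 2*⟪a,b⟫ + ⟪a,a⟫) * (1/2 - β) := by
    linear_combination (1/2) * e1 + (⟪a,a⟫ - ⟪a,b⟫) * hsum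
  have T2 : β * (⟪b,c⟫ - ⟪a,b⟫ - ⟪a,c⟫ + ⟪a,a⟫)
      = (⟪c,c⟫ - 2*⟪a,c⟫ + ⟪a,a⟫) * (1/2 - γ) := by
    linear_combination (1/2) * e2 + (⟪a,a⟫ - ⟪a,c⟫) * hsum
  have hb2 : 1/2 ≤ β := by nlinarith [mul_nonpos_of_nonneg_of_nonpos hγ hτ.le]
  have hg2 : 1/2 ≤ γ := by nlinarith [mul_nonpos_of_nonneg_of_nonpos hβ hτ.le]
  nlinarith [T1, mul_pos d1 d2]

/-- If a triangle `abc` contains its circumcenter and some line separates the disks of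
radius `ρ` centered at `a` and `b` from the disk centered at `c` (the line being disjoint
from the interiors of all three disks), then the line through the midpoints of `[a,c]`
and `[b,c]` separates the disk centered at `c` from the disks centered at `a` and `b`,
and it is disjoint from the interiors of all three disks.  Lines are encoded as level
sets `{x | ⟪n,x⟫ = t}` of nonzero linear functionals; separation of two families of
disks means containment in the two opposite closed half-planes (which automatically
forces the line to avoid the interiors of the disks). -/
theorem stmt6 (ρ : ℝ) (hρ : 0 < ρ) (a b c : EuclideanSpace ℝ (Fin 2))
    (hind : AffineIndependent ℝ ![a, b, c])
    (hcc : ∃ o : EuclideanSpace ℝ (Fin 2), dist o a = dist o b ∧ dist o b = dist o c ∧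
      o ∈ convexHull ℝ ({a, b, c} : Set (EuclideanSpace ℝ (Fin 2))))
    (hsep : ∃ (n : EuclideanSpace ℝ (Fin 2)) (t : ℝ), n ≠ 0 ∧
      (closedBall a ρ ∪ closedBall b ρ ⊆ {x | ⟪n, x⟫ ≤ t}) ∧
      (closedBall c ρ ⊆ {x | t ≤ ⟪n, x⟫})) :
    ∃ (n : EuclideanSpace ℝ (Fin 2)) (t : ℝ), n ≠ 0 ∧
      ⟪n, midpoint ℝ a c⟫ = t ∧ ⟪n, midpoint ℝ b c⟫ = t ∧
      (closedBall a ρ ∪ closedBall b ρ ⊆ {x | ⟪n, x⟫ ≤ t}) ∧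
      (closedBall c ρ ⊆ {x | t ≤ ⟪n, x⟫}) := by
  classical
  obtain ⟨o, ho1, ho2, ho3⟩ := hcc
  obtain ⟨n0, t0, hn0, hle, hge⟩ := hsep
  have hab : a ≠ b := fun h => (by decide : (0 : Fin 3) ≠ 1) (hind.injective (by simpa using h))
  have hac : a ≠ c := fun h => (by decide : (0 : Fin 3) ≠ 2) (hind.injective (by simpa using h))
  have hbc : b ≠ c := fun h => (by decide : (1 : Fin 3) ≠ 2) (hind.injective (by simpa using h))
  have hA : 0 ≤ ⟪b - a, c - a⟫ := nonobtuse hab hac ho1 (ho1.trans ho2) ho3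
  have hB : 0 ≤ ⟪a - b, c - b⟫ := by
    refine nonobtuse hab.symm hbc ho1.symm ho2 ?_
    rwa [Set.insert_comm]
  have hvv : (0:ℝ) < ⟪b - a, b - a⟫ := by
    rw [real_inner_self_eq_norm_sq]
    exact pow_pos (norm_pos_iff.mpr (sub_ne_zero.2 hab.symm)) 2
  set s : ℝ := ⟪c - a, b - a⟫ / ⟪b - a, b - a⟫ with hs_def
  have hs0 : 0 ≤ s := div_nonneg (by rwa [real_inner_comm]) hvv.le
  have hs1 : s ≤ 1 := by
    rw [hs_def, div_le_one hvv]
    have hB' := hB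
    simp only [inner_sub_left, inner_sub_right, real_inner_comm] at hB' ⊢
    linarith
  set n : EuclideanSpace ℝ (Fin 2) := (c - a) - s • (b - a) with hn_def
  have hnv : ⟪n, b - a⟫ = 0 := by
    rw [hn_def, inner_sub_left, real_inner_smul_left, hs_def,
      div_mul_cancel₀ _ (ne_of_gt hvv), sub_self]
  have hnn : ⟪n, c - a⟫ = ⟪n, n⟫ := by
    have hca : c - a = n + s • (b - a) := by rw [hn_def]; abel
    rw [hca, inner_add_right, real_inner_smul_right, hnv]
    ring
  -- lower bound on the norm of n
  have hn0p : (0:ℝ) < ‖n0‖ := norm_pos_iff.mpr hn0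
  have hmemA : a + (ρ / ‖n0‖) • n0 ∈ closedBall a ρ := by
    rw [mem_closedBall, dist_self_add_left, norm_smul, Real.norm_eq_abs,
      abs_of_nonneg (by positivity), div_mul_cancel₀ _ (ne_of_gt hn0p)]
  have hmemB : b + (ρ / ‖n0‖) • n0 ∈ closedBall b ρ := by
    rw [mem_closedBall, dist_self_add_left, norm_smul, Real.norm_eq_abs,
      abs_of_nonneg (by positivity), div_mul_cancel₀ _ (ne_of_gt hn0p)]
  have hmemC : c - (ρ / ‖n0‖) • n0 ∈ closedBall c ρ := by
    rw [mem_closedBall, dist_self_sub_left, norm_smul, Real.norm_eq_abs,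
      abs_of_nonneg (by positivity), div_mul_cancel₀ _ (ne_of_gt hn0p)]
  have hA' : ⟪n0, a⟫ + ρ * ‖n0‖ ≤ t0 := by
    have := hle (Set.mem_union_left _ hmemA)
    simp only [Set.mem_setOf_eq, inner_add_right, real_inner_smul_right,
      real_inner_self_eq_norm_sq] at this
    have heq : ρ / ‖n0‖ * ‖n0‖ ^ 2 = ρ * ‖n0‖ := by field_simp
    linarith [heq ▸ this]
  have hB' : ⟪n0, b⟫ + ρ * ‖n0‖ ≤ t0 := by
    have := hle (Set.mem_union_right _ hmemB)
    simp only [Set.mem_setOf_eq, inner_add_right, real_inner_smul_right,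
      real_inner_self_eq_norm_sq] at this
    have heq : ρ / ‖n0‖ * ‖n0‖ ^ 2 = ρ * ‖n0‖ := by field_simp
    linarith [heq ▸ this]
  have hC' : t0 ≤ ⟪n0, c⟫ - ρ * ‖n0‖ := by
    have := hge hmemC
    simp only [Set.mem_setOf_eq, inner_sub_right, real_inner_smul_right,
      real_inner_self_eq_norm_sq] at this
    have heq : ρ / ‖n0‖ * ‖n0‖ ^ 2 = ρ * ‖n0‖ := by field_simp
    linarith [heq ▸ this]
  have hkey : 2 * ρ * ‖n0‖ ≤ ⟪n0, n⟫ := by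
    have hexp : ⟪n0, n⟫ = (1 - s) * (⟪n0, c⟫ - ⟪n0, a⟫) + s * (⟪n0, c⟫ - ⟪n0, b⟫) := by
      rw [hn_def]
      simp only [inner_sub_right, real_inner_smul_right]
      ring
    rw [hexp]
    have h1 : 2 * ρ * ‖n0‖ ≤ ⟪n0, c⟫ - ⟪n0, a⟫ := by linarith
    have h2 : 2 * ρ * ‖n0‖ ≤ ⟪n0, c⟫ - ⟪n0, b⟫ := by linarith
    nlinarith [mul_le_mul_of_nonneg_left h1 (by linarith : (0:ℝ) ≤ 1 - s),
      mul_le_mul_of_nonneg_left h2 hs0]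
  have hnorm : 2 * ρ ≤ ‖n‖ := by
    have hcs : ⟪n0, n⟫ ≤ ‖n0‖ * ‖n‖ := real_inner_le_norm n0 n
    have : ‖n0‖ * (2 * ρ) ≤ ‖n0‖ * ‖n‖ := by linarith [hkey, hcs]
    exact (mul_le_mul_iff_right₀ hn0p).mp this
  have hnne : n ≠ 0 := by
    intro h
    rw [h, norm_zero] at hnorm
    linarith
  -- final assembly
  have hnb : ⟪n, b⟫ = ⟪n, a⟫ := by
    have := hnv
    rw [inner_sub_right] at this
    linarith
  have hnca : ⟪n, c⟫ = ⟪n, a⟫ + ⟪n, n⟫ := by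
    have := hnn
    rw [inner_sub_right] at this
    linarith
  set t : ℝ := ⟪n, midpoint ℝ a c⟫ with ht_def
  have ht : t = ⟪n, a⟫ + ⟪n, n⟫ / 2 := by
    rw [ht_def, midpoint_eq_smul_add, real_inner_smul_right, inner_add_right, hnca,
      invOf_eq_inv]
    ring
  have hselfnn : ⟪n, n⟫ = ‖n‖ ^ 2 := real_inner_self_eq_norm_sq n
  have hρn : ‖n‖ * ρ ≤ ⟪n, n⟫ / 2 := by nlinarith [norm_nonneg n]
  refine ⟨n, t, hnne, rfl, ?_, ?_, ?_⟩
  · rw [midpoint_eq_smul_add, real_inner_smul_right, inner_add_right, hnb, ht, hnca,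
      invOf_eq_inv]
    ring
  · rintro x (hx | hx)
    · have hxa : ‖x - a‖ ≤ ρ := mem_closedBall_iff_norm.mp hx
      have hcs := real_inner_le_norm n (x - a)
      have hnx : ⟪n, x - a⟫ = ⟪n, x⟫ - ⟪n, a⟫ := inner_sub_right n x a
      have hmul : ‖n‖ * ‖x - a‖ ≤ ‖n‖ * ρ := mul_le_mul_of_nonneg_left hxa (norm_nonneg n)
      simp only [Set.mem_setOf_eq]
      rw [ht]
      linarith
    · have hxa : ‖x - b‖ ≤ ρ := mem_closedBall_iff_norm.mp hx
      have hcs := real_inner_le_norm n (x - b)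
      have hnx : ⟪n, x - b⟫ = ⟪n, x⟫ - ⟪n, b⟫ := inner_sub_right n x b
      have hmul : ‖n‖ * ‖x - b‖ ≤ ‖n‖ * ρ := mul_le_mul_of_nonneg_left hxa (norm_nonneg n)
      simp only [Set.mem_setOf_eq]
      rw [ht]
      linarith [hnb]
  · intro x hx
    have hxc : ‖c - x‖ ≤ ρ := by
      rw [← dist_eq_norm]
      exact dist_comm x c ▸ mem_closedBall.mp hx
    have hcs := real_inner_le_norm n (c - x)
    have hnx : ⟪n, c - x⟫ = ⟪n, c⟫ - ⟪n, x⟫ := inner_sub_right n c x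
    have hmul : ‖n‖ * ‖c - x‖ ≤ ‖n‖ * ρ := mul_le_mul_of_nonneg_left hxc (norm_nonneg n)
    simp only [Set.mem_setOf_eq]
    rw [ht]
    linarith [hnca]
end

section
/- Let λ ∈ (√3/2, 1] and let T be a Euclidean triangle with all side lengths at least 2 such that at least two of its three altitudes have length at least 2λ. Then the area of T is at least 2λ, with equality for the isosceles triangle with legs of length 2 and corresponding altitudes of length exactly 2λ. -/
/-!
The area of a triangle is half a side times the altitude onto it, so a single side of length
`≥ 2` whose opposing altitude is `≥ 2λ` already forces area `≥ 2λ`. Both the area formula and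
the altitude formula are computed in coordinates through the planar cross product: the area is
`|cross (b - a) (c - a)| / 2` (the image of the standard triangle of area `1/2` under a linear
map), and the distance from `p` to the line `bc` is `|cross (p - b) (c - b)| / |bc|` by the
Lagrange identity `cross u v ^ 2 + ⟪u, v⟫ ^ 2 = ‖u‖ ^ 2 * ‖v‖ ^ 2`. Equality holds for the
triangle `0, (2, 0), (-2√(1 - λ²), 2λ)`.
-/

open Real Metric MeasureTheory
open scoped RealInnerProductSpace Pointwise

local notation "ℝ²" => EuclideanSpace ℝ (Fin 2)

lemma mem_vadd_neg_set_iff {G : Type*} [AddCommGroup G] {s : Set G} {k x : G} :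
    x ∈ k +ᵥ -s ↔ k - x ∈ s := by
  rw [Set.mem_vadd_set_iff_neg_vadd_mem, Set.mem_neg, vadd_eq_add, neg_add_rev, neg_neg,
    neg_add_eq_sub]

theorem EuclideanSpace.volume_setOf_forall_mem_Icc {ι : Type*} [Fintype ι] (a b : ι → ℝ) :
    volume {x : EuclideanSpace ℝ ι | ∀ i, x i ∈ Set.Icc (a i) (b i)} =
      ∏ i, ENNReal.ofReal (b i - a i) := by
  have hset : {x : EuclideanSpace ℝ ι | ∀ i, x i ∈ Set.Icc (a i) (b i)} =
      (MeasurableEquiv.toLp 2 (ι → ℝ)).symm ⁻¹' Set.univ.pi fun i => Set.Icc (a i) (b i) := by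
    ext x
    simp [Pi.le_def, forall_and]
  rw [hset, (EuclideanSpace.volume_preserving_symm_measurableEquiv_toLp ι).measure_preimage
    (MeasurableSet.univ_pi fun _ => measurableSet_Icc).nullMeasurableSet, volume_pi_pi]
  simp [Real.volume_Icc]

namespace EuclideanPlane

lemma norm_sq_eq (u : ℝ²) : ‖u‖ ^ 2 = u 0 ^ 2 + u 1 ^ 2 := by
  simp [EuclideanSpace.norm_sq_eq, Fin.sum_univ_two]

lemma dist_sq_eq (x y : ℝ²) : dist x y ^ 2 = (x 0 - y 0) ^ 2 + (x 1 - y 1) ^ 2 := by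
  rw [dist_eq_norm, norm_sq_eq, PiLp.sub_apply, PiLp.sub_apply]

lemma inner_eq (u v : ℝ²) : ⟪u, v⟫ = u 0 * v 0 + u 1 * v 1 := by
  simp [PiLp.inner_apply, Fin.sum_univ_two, mul_comm]

def cross (u v : ℝ²) : ℝ := u 0 * v 1 - u 1 * v 0

lemma cross_sq_add_inner_sq (u v : ℝ²) : cross u v ^ 2 + ⟪u, v⟫ ^ 2 = ‖u‖ ^ 2 * ‖v‖ ^ 2 := by
  rw [inner_eq, norm_sq_eq, norm_sq_eq, cross]
  ring

lemma abs_cross_le (u v : ℝ²) : |cross u v| ≤ ‖u‖ * ‖v‖ :=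
  abs_le_of_sq_le_sq (by nlinarith [cross_sq_add_inner_sq u v, sq_nonneg ⟪u, v⟫]) (by positivity)

lemma cross_swap (u v : ℝ²) : cross u v = -cross v u := by
  rw [cross, cross]
  ring

lemma cross_sub_smul_left (u v : ℝ²) (r : ℝ) : cross (u - r • v) v = cross u v := by
  simp only [cross, PiLp.sub_apply, PiLp.smul_apply, smul_eq_mul]
  ring

lemma cross_sub_sub_swap (a b c : ℝ²) : cross (a - b) (c - b) = -cross (b - a) (c - a) := by
  simp only [cross, PiLp.sub_apply]
  ring

lemma norm_sub_inner_div_smul_mul_norm {u v : ℝ²} (hv : v ≠ 0) :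
    ‖u - (⟪u, v⟫ / ‖v‖ ^ 2) • v‖ * ‖v‖ = |cross u v| := by
  have hv' : ‖v‖ ≠ 0 := norm_ne_zero_iff.2 hv
  have horth : ⟪u - (⟪u, v⟫ / ‖v‖ ^ 2) • v, v⟫ = 0 := by
    rw [inner_sub_left, real_inner_smul_left, real_inner_self_eq_norm_sq]
    field_simp
    ring
  rw [← sq_eq_sq₀ (by positivity) (abs_nonneg _), sq_abs, mul_pow, ← cross_sq_add_inner_sq,
    horth, cross_sub_smul_left]
  ring

theorem infDist_affineSpan_pair (p b c : ℝ²) (h : b ≠ c) :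
    infDist p (line[ℝ, b, c] : Set ℝ²) = |cross (p - b) (c - b)| / dist b c := by
  have hv : c - b ≠ 0 := sub_ne_zero.2 h.symm
  have hdist (r : ℝ) : dist p (AffineMap.lineMap b c r) = ‖(p - b) - r • (c - b)‖ := by
    rw [dist_eq_norm, AffineMap.lineMap_apply, vsub_eq_sub, vadd_eq_add, sub_add_eq_sub_sub_swap]
  rw [dist_comm, dist_eq_norm]
  apply le_antisymm
  · rw [le_div_iff₀ (norm_pos_iff.2 hv), ← norm_sub_inner_div_smul_mul_norm hv, ← hdist]
    gcongr
    exact infDist_le_dist_of_mem (AffineMap.lineMap_mem_affineSpan_pair _ b c)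
  · rw [le_infDist ⟨b, left_mem_affineSpan_pair ℝ b c⟩]
    rintro _ hy
    obtain ⟨r, rfl⟩ := mem_affineSpan_pair_iff_exists_lineMap_eq.1 hy
    rw [div_le_iff₀ (norm_pos_iff.2 hv), hdist, ← cross_sub_smul_left _ _ r]
    exact abs_cross_le _ _

def stdTriangle : Set ℝ² := {x | 0 ≤ x 0 ∧ 0 ≤ x 1 ∧ x 0 + x 1 ≤ 1}

lemma convex_stdTriangle : Convex ℝ stdTriangle := by
  rintro x ⟨hx₀, hx₁, hx⟩ y ⟨hy₀, hy₁, hy⟩ s t hs ht hst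
  refine ⟨?_, ?_, ?_⟩ <;> simp only [PiLp.add_apply, PiLp.smul_apply, smul_eq_mul] <;> nlinarith

theorem convexHull_stdTriangle : convexHull ℝ {0, !₂[1, 0], !₂[0, 1]} = stdTriangle := by
  refine (convexHull_min ?_ convex_stdTriangle).antisymm fun x ⟨h₀, h₁, h⟩ => ?_
  · rintro _ (rfl | rfl | rfl) <;> simp [stdTriangle]
  refine mem_convexHull_of_exists_fintype ![1 - x 0 - x 1, x 0, x 1] ![0, !₂[1, 0], !₂[0, 1]]
    ?_ ?_ ?_ ?_
  · intro i; fin_cases i <;> simp <;> linarith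
  · simp [Fin.sum_univ_three]; ring
  · intro i; fin_cases i <;> simp
  · ext i; fin_cases i <;> simp [Fin.sum_univ_three]

/-- The point reflection of `stdTriangle` in `(1/2, 1/2)` fills up the rest of the unit square,
meeting `stdTriangle` only along the null diagonal. -/
theorem volume_stdTriangle : volume stdTriangle = 2⁻¹ := by
  set T' := (!₂[1, 1] : ℝ²) +ᵥ -stdTriangle
  have hT' (x : ℝ²) : x ∈ T' ↔ 0 ≤ 1 - x 0 ∧ 0 ≤ 1 - x 1 ∧ (1 - x 0) + (1 - x 1) ≤ 1 := by
    rw [mem_vadd_neg_set_iff]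
    simp [stdTriangle]
  have hunion : stdTriangle ∪ T' = {x : ℝ² | ∀ i, x i ∈ Set.Icc 0 1} := by
    ext x
    simp only [Set.mem_union, hT', stdTriangle, Set.mem_ofPred_eq, Fin.forall_fin_two, Set.mem_Icc]
    constructor
    · rintro (⟨h₀, h₁, h⟩ | ⟨h₀, h₁, h⟩) <;> refine ⟨⟨?_, ?_⟩, ?_, ?_⟩ <;> linarith
    · rintro ⟨⟨h₀, h₀'⟩, h₁, h₁'⟩
      by_cases h : x 0 + x 1 ≤ 1
      exacts [Or.inl ⟨h₀, h₁, h⟩, Or.inr ⟨by linarith, by linarith, by linarith⟩]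
  have hinter : stdTriangle ∩ T' ⊆ (line[ℝ, (!₂[1, 0] : ℝ²), !₂[0, 1]] : Set ℝ²) := by
    rintro x ⟨⟨-, -, h⟩, hx⟩
    obtain ⟨-, -, h'⟩ := (hT' x).1 hx
    refine mem_affineSpan_pair_iff_exists_lineMap_eq.2 ⟨x 1, ?_⟩
    ext i
    fin_cases i <;> simp [AffineMap.lineMap_apply]; linarith
  have hline : line[ℝ, (!₂[1, 0] : ℝ²), !₂[0, 1]] ≠ ⊤ := by
    intro h
    obtain ⟨r, hr⟩ :=
      mem_affineSpan_pair_iff_exists_lineMap_eq.1 (h ▸ AffineSubspace.mem_top ℝ ℝ² 0)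
    have h₀ := congrArg (· 0) hr
    have h₁ := congrArg (· 1) hr
    simp [AffineMap.lineMap_apply] at h₀ h₁
    linarith
  have hsum := measure_union_add_inter₀ (μ := volume) (t := T') stdTriangle
    ((convex_stdTriangle.neg.vadd _).nullMeasurableSet _)
  rw [hunion, EuclideanSpace.volume_setOf_forall_mem_Icc,
    measure_mono_null hinter (Measure.addHaar_affineSubspace _ _ hline),
    measure_vadd, Measure.measure_neg] at hsum
  simp only [sub_zero, ENNReal.ofReal_one, Finset.prod_const_one, add_zero, ← two_mul] at hsum
  exact ENNReal.eq_inv_of_mul_eq_one_left (by rw [mul_comm, hsum])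

theorem volume_convexHull_triple (a b c : ℝ²) :
    volume (convexHull ℝ {a, b, c}) = ENNReal.ofReal (|cross (b - a) (c - a)| / 2) := by
  set u := b - a
  set v := c - a
  set L := Matrix.toEuclideanLin !![u 0, v 0; u 1, v 1]
  have hL : L '' {0, !₂[1, 0], !₂[0, 1]} = {0, u, v} := by
    simp only [Set.image_insert_eq, Set.image_singleton, map_zero]
    congr <;> ext i <;> fin_cases i <;> simp [L]
  have hset : ({a, b, c} : Set ℝ²) = a +ᵥ L '' {0, !₂[1, 0], !₂[0, 1]} := by
    simp [hL, Set.vadd_set_insert, u, v]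
  rw [hset, convexHull_vadd, ← LinearMap.image_convexHull, convexHull_stdTriangle, measure_vadd,
    Measure.addHaar_image_linearMap, volume_stdTriangle, LinearMap.det_toLpLin,
    Matrix.det_fin_two_of, div_eq_mul_inv, ENNReal.ofReal_mul (abs_nonneg _),
    ENNReal.ofReal_inv_of_pos two_pos, ENNReal.ofReal_ofNat, cross, mul_comm (u 1)]

theorem volume_convexHull_triple_eq_infDist_mul_dist (a b c : ℝ²) (h : b ≠ c) :
    volume (convexHull ℝ {a, b, c}) =
      ENNReal.ofReal (infDist a (line[ℝ, b, c] : Set ℝ²) * dist b c / 2) := by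
  rw [volume_convexHull_triple, infDist_affineSpan_pair a b c h,
    div_mul_cancel₀ _ (dist_ne_zero.2 h), cross_sub_sub_swap, abs_neg]

theorem le_volume_convexHull_of_le_infDist {a b c : ℝ²} {h d : ℝ} (hd : 0 < d)
    (hbc : d ≤ dist b c) (ha : h ≤ infDist a (line[ℝ, b, c] : Set ℝ²)) :
    ENNReal.ofReal (h * d / 2) ≤ volume (convexHull ℝ {a, b, c}) := by
  rw [volume_convexHull_triple_eq_infDist_mul_dist a b c (dist_pos.1 (hd.trans_le hbc))]
  gcongr
  exact infDist_nonneg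

theorem exists_isosceles_triangle {l : ℝ} (hl₀ : 0 < l) (hl₁ : l ≤ 1) :
    ∃ a b c : ℝ², AffineIndependent ℝ ![a, b, c] ∧
      dist a b = 2 ∧ dist a c = 2 ∧ 2 ≤ dist b c ∧
      infDist c (line[ℝ, a, b] : Set ℝ²) = 2 * l ∧
      infDist b (line[ℝ, a, c] : Set ℝ²) = 2 * l ∧
      volume (convexHull ℝ {a, b, c}) = ENNReal.ofReal (2 * l) := by
  set s := √(1 - l ^ 2)
  have hs : s ^ 2 = 1 - l ^ 2 := sq_sqrt (by nlinarith)
  set b : ℝ² := !₂[2, 0]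
  -- the angle at `0` is obtuse, which makes `bc` the longest side
  set c : ℝ² := !₂[-2 * s, 2 * l]
  have hcross : cross (b - 0) (c - 0) = 4 * l := by
    simp [cross, b, c]
    ring
  have hab : dist 0 b = 2 := (sq_eq_sq₀ dist_nonneg zero_le_two).1 (by rw [dist_sq_eq]; simp [b])
  have hac : dist 0 c = 2 := (sq_eq_sq₀ dist_nonneg zero_le_two).1 (by
    rw [dist_sq_eq]
    simp [c]
    nlinarith)
  have hbc : 2 ≤ dist b c := (sq_le_sq₀ zero_le_two dist_nonneg).1 (by
    rw [dist_sq_eq]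
    simp [b, c]
    nlinarith [sqrt_nonneg (1 - l ^ 2)])
  have hb : infDist b (line[ℝ, 0, c] : Set ℝ²) = 2 * l := by
    rw [infDist_affineSpan_pair _ _ _ (dist_pos.1 (by linarith)), hac, hcross,
      abs_of_pos (by linarith)]
    ring
  refine ⟨0, b, c, ?_, hab, hac, hbc, ?_, hb, ?_⟩
  · refine affineIndependent_of_ne_of_mem_of_notMem_of_mem (dist_pos.1 (by linarith))
      (left_mem_affineSpan_pair ℝ 0 c) (fun hmem => ?_) (right_mem_affineSpan_pair ℝ 0 c)
    have := infDist_zero_of_mem hmem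
    linarith
  · rw [infDist_affineSpan_pair _ _ _ (dist_pos.1 (by linarith)), hab, cross_swap, abs_neg,
      hcross, abs_of_pos (by linarith)]
    ring
  · rw [volume_convexHull_triple, hcross, abs_of_pos (by linarith)]
    ring_nf

end EuclideanPlane

/-- For `λ ∈ (√3/2, 1]`, every Euclidean triangle with all side lengths at least `2`
and at least two altitudes of length at least `2λ` has area at least `2λ`; moreover the
bound is attained by an isosceles triangle with two sides of length `2` whose
corresponding altitudes have length exactly `2λ`. -/
theorem stmt7 (l : ℝ) (hl1 : Real.sqrt 3 / 2 < l) (hl2 : l ≤ 1) :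
    (∀ a b c : EuclideanSpace ℝ (Fin 2), AffineIndependent ℝ ![a, b, c] →
      2 ≤ dist a b → 2 ≤ dist b c → 2 ≤ dist a c →
      ((2 * l ≤ infDist a (affineSpan ℝ {b, c} : Set (EuclideanSpace ℝ (Fin 2))) ∧
        2 * l ≤ infDist b (affineSpan ℝ {a, c} : Set (EuclideanSpace ℝ (Fin 2)))) ∨
       (2 * l ≤ infDist a (affineSpan ℝ {b, c} : Set (EuclideanSpace ℝ (Fin 2))) ∧
        2 * l ≤ infDist c (affineSpan ℝ {a, b} : Set (EuclideanSpace ℝ (Fin 2)))) ∨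
       (2 * l ≤ infDist b (affineSpan ℝ {a, c} : Set (EuclideanSpace ℝ (Fin 2))) ∧
        2 * l ≤ infDist c (affineSpan ℝ {a, b} : Set (EuclideanSpace ℝ (Fin 2))))) →
      ENNReal.ofReal (2 * l) ≤ volume (convexHull ℝ ({a, b, c} : Set (EuclideanSpace ℝ (Fin 2))))) ∧
    (∃ a b c : EuclideanSpace ℝ (Fin 2), AffineIndependent ℝ ![a, b, c] ∧
      dist a b = 2 ∧ dist a c = 2 ∧ 2 ≤ dist b c ∧
      infDist c (affineSpan ℝ {a, b} : Set (EuclideanSpace ℝ (Fin 2))) = 2 * l ∧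
      infDist b (affineSpan ℝ {a, c} : Set (EuclideanSpace ℝ (Fin 2))) = 2 * l ∧
      volume (convexHull ℝ ({a, b, c} : Set (EuclideanSpace ℝ (Fin 2)))) = ENNReal.ofReal (2 * l)) := by
  have hl0 : 0 < l := lt_trans (by positivity) hl1
  refine ⟨fun a b c _ _ hbc hac haltitudes => ?_,
    EuclideanPlane.exists_isosceles_triangle hl0 hl2⟩
  rw [show 2 * l = 2 * l * 2 / 2 by ring]
  rcases haltitudes with ⟨ha, -⟩ | ⟨ha, -⟩ | ⟨hb, -⟩
  · exact EuclideanPlane.le_volume_convexHull_of_le_infDist two_pos hbc ha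
  · exact EuclideanPlane.le_volume_convexHull_of_le_infDist two_pos hbc ha
  · rw [Set.insert_comm]
    exact EuclideanPlane.le_volume_convexHull_of_le_infDist two_pos hac hb
end

section
/- Let √3/2 ≤ λ ≤ 2√2/3 and let T be a non-obtuse Euclidean triangle with all side lengths at least 2 and at least two altitudes of length at least 2λ. Then the circumradius of T is at least √(2 − 2√(1−λ²)) / λ, with equality if and only if T is congruent to the isosceles triangle with two sides of length 2 and base of length 2·√(2 − 2√(1−λ²)). -/
open Real Metric
open scoped RealInnerProductSpace

/-!
Let `i, j` be the vertices with long altitudes, `k` the third one, `θ` the angle at `k`,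
`b, c` the sides at `k` and `a` the side opposite, and put `r = √(1 - λ²)`. The altitudes from
`i` and `j` are at most `b sin θ` and `c sin θ`, and `2R = a / sin θ`, so the bound reads
`4 (2 - 2r) sin² θ ≤ λ² a²` with `a² = b² + c² - 2bc cos θ`.

If `cos θ ≤ r`, the difference of the two sides is
`λ² (b - c)² + 2λ² (1 - cos θ)(bc - 4) + 8 (1 - cos θ)(1 - r)(r - cos θ) ≥ 0`, and it vanishes
only for `b = c = 2`, `cos θ = r`. If `cos θ > r`, the altitude bounds give
`bc sin² θ ≥ 4λ²`, and the bound follows, strictly, from `(1 - x)(1 + x)²` being decreasing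
for `x ≥ 1/3`; this is where `λ ≤ 2√2/3` enters.
-/

namespace InnerProductGeometry
variable {V : Type*} [NormedAddCommGroup V] [InnerProductSpace ℝ V]

theorem norm_sub_inner_div_inner_smul_eq_mul_sin_angle (u v : V) :
    ‖u - (⟪u, v⟫ / ⟪v, v⟫) • v‖ = ‖u‖ * Real.sin (angle u v) := by
  rcases eq_or_ne v 0 with rfl | hv
  · simp [angle_zero_right]
  have hcos := cos_angle_mul_norm_mul_norm u v
  have hsin := Real.sin_sq_add_cos_sq (angle u v)
  refine (sq_eq_sq₀ (norm_nonneg _) (mul_nonneg (norm_nonneg u) (sin_angle_nonneg u v))).mp ?_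
  rw [norm_sub_sq_real, norm_smul, real_inner_smul_right, Real.norm_eq_abs, mul_pow, sq_abs,
    real_inner_self_eq_norm_sq, ← hcos]
  field_simp
  linear_combination (-‖u‖ ^ 2) * hsin

end InnerProductGeometry

namespace EuclideanGeometry
variable {V P : Type*} [NormedAddCommGroup V] [InnerProductSpace ℝ V] [MetricSpace P]
  [NormedAddTorsor V P]

theorem infDist_le_dist_mul_sin_angle {s : AffineSubspace ℝ P} {a b : P} (ha : a ∈ s)
    (hb : b ∈ s) (p : P) : infDist p s ≤ dist p a * Real.sin (∠ p a b) := by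
  have hmem : (⟪p -ᵥ a, b -ᵥ a⟫ / ⟪b -ᵥ a, b -ᵥ a⟫) • (b -ᵥ a) +ᵥ a ∈ s :=
    AffineSubspace.smul_vsub_vadd_mem _ _ hb ha ha
  refine (infDist_le_dist_of_mem hmem).trans_eq ?_
  rw [dist_eq_norm_vsub V, vsub_vadd_eq_vsub_sub,
    InnerProductGeometry.norm_sub_inner_div_inner_smul_eq_mul_sin_angle, dist_eq_norm_vsub V]
  rfl

end EuclideanGeometry

open EuclideanGeometry

section CircumradiusBound
variable {l r b c s t : ℝ}

lemma one_sub_mul_one_add_sq_lt (hr : 1 / 3 ≤ r) (hrt : r < t) :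
    (1 - t) * (1 + t) ^ 2 < (1 - r) * (1 + r) ^ 2 := by
  have h : (1 - r) * (1 + r) ^ 2 - (1 - t) * (1 + t) ^ 2 =
      (t - r) * (r + t + r ^ 2 + r * t + t ^ 2 - 1) := by ring
  nlinarith [mul_pos (sub_pos.mpr hrt) (show 0 < r + t + r ^ 2 + r * t + t ^ 2 - 1 by nlinarith)]

lemma mul_sin_sq_le_of_cos_le (hlr : l ^ 2 + r ^ 2 = 1) (hl : 0 < l)
    (hb : 2 ≤ b) (hc : 2 ≤ c) (hst : s ^ 2 + t ^ 2 = 1) (ht : t < 1) (htr : t ≤ r) :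
    4 * (2 - 2 * r) * s ^ 2 ≤ l ^ 2 * (b ^ 2 + c ^ 2 - 2 * b * c * t) ∧
      (4 * (2 - 2 * r) * s ^ 2 = l ^ 2 * (b ^ 2 + c ^ 2 - 2 * b * c * t) →
        b = 2 ∧ c = 2 ∧ t = r) := by
  have hid : l ^ 2 * (b ^ 2 + c ^ 2 - 2 * b * c * t) - 4 * (2 - 2 * r) * s ^ 2 =
      l ^ 2 * (b - c) ^ 2 + 2 * l ^ 2 * (1 - t) * (b * c - 4) + 8 * (1 - t) * (1 - r) * (r - t) := by
    linear_combination (-4 * (2 - 2 * r)) * hst + 8 * (1 - t) * hlr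
  have hr1 : r < 1 := by nlinarith
  have hbc : 0 ≤ b * c - 4 := by nlinarith
  have h₁ : 0 ≤ l ^ 2 * (b - c) ^ 2 := by positivity
  have h₂ : 0 ≤ 2 * l ^ 2 * (1 - t) * (b * c - 4) :=
    mul_nonneg (mul_nonneg (by positivity) (by linarith)) hbc
  have h₃ : 0 ≤ 8 * (1 - t) * (1 - r) * (r - t) :=
    mul_nonneg (mul_nonneg (by linarith) (by linarith)) (by linarith)
  refine ⟨by linarith, fun heq => ?_⟩
  have hbc_eq : b - c = 0 := by
    have hz : l ^ 2 * (b - c) ^ 2 = 0 := by linarith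
    simpa [hl.ne'] using hz
  have hbc4 : b * c - 4 = 0 := by
    have hz : 2 * l ^ 2 * (1 - t) * (b * c - 4) = 0 := by linarith
    exact (mul_eq_zero.mp hz).resolve_left (by have := sub_pos.mpr ht; positivity)
  have htr' : r - t = 0 := by
    have hz : 8 * (1 - t) * (1 - r) * (r - t) = 0 := by linarith
    exact (mul_eq_zero.mp hz).resolve_left
      (by have := sub_pos.mpr ht; have := sub_pos.mpr hr1; positivity)
  exact ⟨by nlinarith, by nlinarith, by linarith⟩

lemma mul_sin_sq_lt_of_lt_cos (hr : 1 / 3 ≤ r) (hlr : l ^ 2 + r ^ 2 = 1) (hl : 0 < l)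
    (hst : s ^ 2 + t ^ 2 = 1) (hrt : r < t) (hbs : 2 * l ≤ b * s) (hcs : 2 * l ≤ c * s) :
    4 * (2 - 2 * r) * s ^ 2 < l ^ 2 * (b ^ 2 + c ^ 2 - 2 * b * c * t) := by
  have hs : s ≠ 0 := by rintro rfl; linarith [mul_zero b]
  have hs2 : 0 < s ^ 2 := by positivity
  have hr1 : r < 1 := by nlinarith
  have ht1 : t < 1 := by nlinarith
  have hbc : 4 * l ^ 2 ≤ b * c * s ^ 2 := by
    nlinarith [mul_le_mul hbs hcs (by positivity) (by linarith)]
  have hsides : 2 * b * c * (1 - t) ≤ b ^ 2 + c ^ 2 - 2 * b * c * t := by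
    nlinarith [sq_nonneg (b - c)]
  have hf := one_sub_mul_one_add_sq_lt hr hrt
  refine lt_of_mul_lt_mul_right ?_ hs2.le
  calc 4 * (2 - 2 * r) * s ^ 2 * s ^ 2
      = 8 * (1 - r) * (1 - t) * ((1 - t) * (1 + t) ^ 2) := by
        rw [show s ^ 2 = (1 - t) * (1 + t) by linarith]; ring
    _ < 8 * (1 - r) * (1 - t) * ((1 - r) * (1 + r) ^ 2) := by
        have := sub_pos.mpr hr1; have := sub_pos.mpr ht1; gcongr
    _ = 2 * l ^ 2 * (1 - t) * (4 * l ^ 2) := by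
        rw [show l ^ 2 = (1 - r) * (1 + r) by linarith]; ring
    _ ≤ 2 * l ^ 2 * (1 - t) * (b * c * s ^ 2) := by
        gcongr
    _ = l ^ 2 * s ^ 2 * (2 * b * c * (1 - t)) := by ring
    _ ≤ l ^ 2 * (b ^ 2 + c ^ 2 - 2 * b * c * t) * s ^ 2 := by
        rw [mul_right_comm]; gcongr

lemma two_mul_sqrt_mul_sin_le (hr : 1 / 3 ≤ r) (hlr : l ^ 2 + r ^ 2 = 1) (hl : 0 < l)
    (hb : 2 ≤ b) (hc : 2 ≤ c) (hst : s ^ 2 + t ^ 2 = 1) (hbs : 2 * l ≤ b * s)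
    (hcs : 2 * l ≤ c * s) {a : ℝ} (ha : 0 ≤ a) (ha2 : a ^ 2 = b ^ 2 + c ^ 2 - 2 * b * c * t) :
    2 * √(2 - 2 * r) * s ≤ l * a ∧
      (2 * √(2 - 2 * r) * s = l * a → b = 2 ∧ c = 2 ∧ a = 2 * √(2 - 2 * r)) := by
  have hs : 0 < s := by nlinarith
  have hm : √(2 - 2 * r) ^ 2 = 2 - 2 * r := sq_sqrt (by nlinarith)
  have hsq : (2 * √(2 - 2 * r) * s) ^ 2 = 4 * (2 - 2 * r) * s ^ 2 := by
    rw [mul_pow, mul_pow, hm]; ring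
  obtain ⟨hle, heq⟩ : 4 * (2 - 2 * r) * s ^ 2 ≤ l ^ 2 * a ^ 2 ∧
      (4 * (2 - 2 * r) * s ^ 2 = l ^ 2 * a ^ 2 → b = 2 ∧ c = 2 ∧ t = r) := by
    rw [ha2]
    rcases le_or_gt t r with htr | hrt
    · exact mul_sin_sq_le_of_cos_le hlr hl hb hc hst (by nlinarith) htr
    · have hlt := mul_sin_sq_lt_of_lt_cos hr hlr hl hst hrt hbs hcs
      exact ⟨hlt.le, fun h => absurd h hlt.ne⟩
  refine ⟨(pow_le_pow_iff_left₀ (by positivity) (by positivity) two_ne_zero).mp ?_,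
    fun h => ?_⟩
  · rwa [hsq, mul_pow]
  · obtain ⟨rfl, rfl, rfl⟩ := heq (by rw [← hsq, h, mul_pow])
    refine ⟨rfl, rfl, (sq_eq_sq₀ ha (by positivity)).mp ?_⟩
    rw [ha2, mul_pow, hm]; ring

end CircumradiusBound

namespace Affine.Triangle
variable {V P : Type*} [NormedAddCommGroup V] [InnerProductSpace ℝ V] [MetricSpace P]
  [NormedAddTorsor V P]

theorem sqrt_div_le_circumradius {l r : ℝ} (hr : 1 / 3 ≤ r) (hlr : l ^ 2 + r ^ 2 = 1)
    (hl : 0 < l) (T : Triangle ℝ P) {i j k : Fin 3} (hij : i ≠ j) (hik : i ≠ k) (hjk : j ≠ k)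
    (hb : 2 ≤ dist (T.points i) (T.points k)) (hc : 2 ≤ dist (T.points j) (T.points k))
    (hi : 2 * l ≤ infDist (T.points i) (affineSpan ℝ (T.points '' {i}ᶜ)))
    (hj : 2 * l ≤ infDist (T.points j) (affineSpan ℝ (T.points '' {j}ᶜ))) :
    √(2 - 2 * r) / l ≤ T.circumradius ∧
      (T.circumradius = √(2 - 2 * r) / l →
        dist (T.points k) (T.points i) = 2 ∧ dist (T.points k) (T.points j) = 2 ∧
          dist (T.points i) (T.points j) = 2 * √(2 - 2 * r)) := by
  set θ := ∠ (T.points i) (T.points k) (T.points j)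
  have hbs : 2 * l ≤ dist (T.points i) (T.points k) * Real.sin θ :=
    hi.trans (infDist_le_dist_mul_sin_angle (T.mem_affineSpan_image_iff.2 hik.symm)
      (T.mem_affineSpan_image_iff.2 hij.symm) _)
  have hcs : 2 * l ≤ dist (T.points j) (T.points k) * Real.sin θ := by
    rw [show θ = ∠ (T.points j) (T.points k) (T.points i) from angle_comm _ _ _]
    exact hj.trans (infDist_le_dist_mul_sin_angle (T.mem_affineSpan_image_iff.2 hjk.symm)
      (T.mem_affineSpan_image_iff.2 hij) _)
  have hcos := law_cos (T.points i) (T.points k) (T.points j)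
  obtain ⟨hle, heq⟩ := two_mul_sqrt_mul_sin_le hr hlr hl hb hc (sin_sq_add_cos_sq θ) hbs hcs
    (a := dist (T.points i) (T.points j)) dist_nonneg
    (by linear_combination hcos)
  have hs : 0 < Real.sin θ := by nlinarith
  rw [← T.dist_div_sin_angle_div_two_eq_circumradius hik hij hjk.symm, div_div]
  refine ⟨(div_le_div_iff₀ hl (by positivity)).2 (by linarith), fun h => ?_⟩
  rw [div_eq_div_iff (by positivity) hl.ne'] at h
  obtain ⟨hb2, hc2, ha⟩ := heq (by linarith)
  exact ⟨by rwa [dist_comm], by rwa [dist_comm], ha⟩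

theorem circumradius_eq_of_dist_eq {l r : ℝ} (hlr : l ^ 2 + r ^ 2 = 1) (hl : 0 < l)
    (T : Triangle ℝ P) {i j k : Fin 3} (hij : i ≠ j) (hik : i ≠ k) (hjk : j ≠ k)
    (hb : dist (T.points i) (T.points j) = 2) (hc : dist (T.points i) (T.points k) = 2)
    (ha : dist (T.points j) (T.points k) = 2 * √(2 - 2 * r)) :
    T.circumradius = √(2 - 2 * r) / l := by
  have hm : √(2 - 2 * r) ^ 2 = 2 - 2 * r := sq_sqrt (by nlinarith)
  have hcos := law_cos (T.points j) (T.points i) (T.points k)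
  rw [dist_comm (T.points j) (T.points i), dist_comm (T.points k) (T.points i), hb, hc, ha] at hcos
  have hcos' : Real.cos (∠ (T.points j) (T.points i) (T.points k)) = r := by
    linear_combination hcos / 8 - hm / 2
  have hsin : Real.sin (∠ (T.points j) (T.points i) (T.points k)) = l := by
    rw [sin_eq_sqrt_one_sub_cos_sq (angle_nonneg _ _ _) (angle_le_pi _ _ _), hcos',
      show 1 - r ^ 2 = l ^ 2 by linarith, sqrt_sq hl.le]
  rw [← T.dist_div_sin_angle_div_two_eq_circumradius hij.symm hjk hik, hsin, ha]
  ring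

end Affine.Triangle

theorem stmt10_general (l : ℝ) (hl0 : Real.sqrt 3 / 2 ≤ l) (hl : l ≤ 2 * Real.sqrt 2 / 3)
    (s : Affine.Simplex ℝ (EuclideanSpace ℝ (Fin 2)) 2)
    (hside : ∀ i j : Fin 3, i ≠ j → 2 ≤ dist (s.points i) (s.points j))
    (halt : ∃ i j : Fin 3, i ≠ j ∧
      2 * l ≤ infDist (s.points i) (affineSpan ℝ (s.points '' {i}ᶜ) : Set (EuclideanSpace ℝ (Fin 2))) ∧
      2 * l ≤ infDist (s.points j) (affineSpan ℝ (s.points '' {j}ᶜ) : Set (EuclideanSpace ℝ (Fin 2)))) :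
    Real.sqrt (2 - 2 * Real.sqrt (1 - l ^ 2)) / l ≤ s.circumradius ∧
    (s.circumradius = Real.sqrt (2 - 2 * Real.sqrt (1 - l ^ 2)) / l ↔
      ∃ i j k : Fin 3, i ≠ j ∧ i ≠ k ∧ j ≠ k ∧
        dist (s.points i) (s.points j) = 2 ∧
        dist (s.points i) (s.points k) = 2 ∧
        dist (s.points j) (s.points k) = 2 * Real.sqrt (2 - 2 * Real.sqrt (1 - l ^ 2))) := by
  have hl_pos : 0 < l := lt_of_lt_of_le (by positivity) hl0
  have hl2 : l ^ 2 ≤ 8 / 9 := by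
    nlinarith [sq_sqrt (show (0 : ℝ) ≤ 2 by norm_num), sqrt_nonneg 2]
  have hlr : l ^ 2 + √(1 - l ^ 2) ^ 2 = 1 := by rw [sq_sqrt (by linarith)]; ring
  have hr : 1 / 3 ≤ √(1 - l ^ 2) := (le_sqrt (by norm_num) (by linarith)).2 (by linarith)
  obtain ⟨i, j, hij, hi, hj⟩ := halt
  have hthird : ∀ i j : Fin 3, i ≠ j → ∃ k, k ≠ i ∧ k ≠ j := by decide
  obtain ⟨k, hki, hkj⟩ := hthird i j hij
  obtain ⟨hle, heq⟩ := Affine.Triangle.sqrt_div_le_circumradius hr hlr hl_pos s hij hki.symm hkj.symm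
    (hside i k hki.symm) (hside j k hkj.symm) hi hj
  refine ⟨hle, fun h => ?_, ?_⟩
  · obtain ⟨hki', hkj', hij'⟩ := heq h
    exact ⟨k, i, j, hki, hkj, hij, hki', hkj', hij'⟩
  · rintro ⟨i', j', k', hij', hik', hjk', hb, hc, ha⟩
    exact Affine.Triangle.circumradius_eq_of_dist_eq hlr hl_pos s hij' hik' hjk' hb hc ha

/-- For `√3/2 ≤ λ ≤ 2√2/3`: a non-obtuse triangle (one containing its circumcenter)
with side lengths at least `2` and at least two altitudes of length at least `2λ` has
circumradius at least `√(2−2√(1−λ²))/λ`, with equality iff the triangle is congruent to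
the isosceles triangle with two sides of length `2` and base `2√(2−2√(1−λ²))`. -/
theorem stmt10 (l : ℝ) (hl0 : Real.sqrt 3 / 2 ≤ l) (hl : l ≤ 2 * Real.sqrt 2 / 3)
    (s : Affine.Simplex ℝ (EuclideanSpace ℝ (Fin 2)) 2)
    (hcc : s.circumcenter ∈ convexHull ℝ (Set.range s.points))
    (hside : ∀ i j : Fin 3, i ≠ j → 2 ≤ dist (s.points i) (s.points j))
    (halt : ∃ i j : Fin 3, i ≠ j ∧
      2 * l ≤ infDist (s.points i) (affineSpan ℝ (s.points '' {i}ᶜ) : Set (EuclideanSpace ℝ (Fin 2))) ∧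
      2 * l ≤ infDist (s.points j) (affineSpan ℝ (s.points '' {j}ᶜ) : Set (EuclideanSpace ℝ (Fin 2)))) :
    Real.sqrt (2 - 2 * Real.sqrt (1 - l ^ 2)) / l ≤ s.circumradius ∧
    (s.circumradius = Real.sqrt (2 - 2 * Real.sqrt (1 - l ^ 2)) / l ↔
      ∃ i j k : Fin 3, i ≠ j ∧ i ≠ k ∧ j ≠ k ∧
        dist (s.points i) (s.points j) = 2 ∧
        dist (s.points i) (s.points k) = 2 ∧
        dist (s.points j) (s.points k) = 2 * Real.sqrt (2 - 2 * Real.sqrt (1 - l ^ 2))) :=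
  stmt10_general l hl0 hl s hside halt
end

section
/- Let 2√2/3 ≤ λ ≤ 1 and let T be a non-obtuse Euclidean triangle with all side lengths at least 2 and at least two altitudes of length at least 2λ. Then the circumradius of T is at least 3√3·λ/4, with equality if and only if T is congruent to the isosceles triangle with legs of length 3λ/√2 and base of length √6·λ. -/
/-!
Let `α`, `β`, `γ` be the angles at the two vertices with long altitudes and at the third vertex.
By the law of sines the two altitudes are `2R sin γ sin β` and `2R sin γ sin α`, so with
`s = (α + β) / 2`, `d = (α - β) / 2` and `c = cos s` their sum is
`8R sin² s cos s cos d ≤ 2R · 4c(1 - c²) ≤ (16√3/9) R`, because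
`8√3/9 - 4c(1 - c²) = 4(c - √3/3)²(c + 2√3/3)`. Hence `4l ≤ (16√3/9) R`. In the equality case
`cos d = 1` and `c = √3/3`, which pins down all three sines and therefore the side lengths.
-/

open Real Metric EuclideanGeometry

theorem eight_mul_sqrt_three_div_nine_sub_eq (c : ℝ) :
    8 * √3 / 9 - 4 * (1 - c ^ 2) * c = 4 * (c - √3 / 3) ^ 2 * (c + 2 * √3 / 3) := by
  linear_combination (4 * c / 3 - 8 * √3 / 27) * sq_sqrt (show (0 : ℝ) ≤ 3 by norm_num)

theorem four_mul_sin_sq_mul_cos_mul_cos_le {s d : ℝ} (hs : 0 ≤ cos s) :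
    4 * sin s ^ 2 * cos s * cos d ≤ 8 * √3 / 9 := by
  have hfac := eight_mul_sqrt_three_div_nine_sub_eq (cos s)
  have : 0 ≤ 4 * (cos s - √3 / 3) ^ 2 * (cos s + 2 * √3 / 3) := by positivity
  calc 4 * sin s ^ 2 * cos s * cos d ≤ 4 * sin s ^ 2 * cos s :=
        mul_le_of_le_one_right (by positivity) (cos_le_one d)
    _ = 4 * (1 - cos s ^ 2) * cos s := by rw [sin_sq]
    _ ≤ 8 * √3 / 9 := by linarith

theorem eq_of_four_mul_sin_sq_mul_cos_mul_cos_eq {s d : ℝ} (hs : 0 ≤ sin s) (hc : 0 ≤ cos s)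
    (h : 4 * sin s ^ 2 * cos s * cos d = 8 * √3 / 9) :
    sin s = √6 / 3 ∧ cos s = √3 / 3 ∧ cos d = 1 := by
  have h3 : √3 ^ 2 = 3 := sq_sqrt (by norm_num)
  have h6 : √6 ^ 2 = 6 := sq_sqrt (by norm_num)
  have hfac := eight_mul_sqrt_three_div_nine_sub_eq (cos s)
  have hle : 8 * √3 / 9 ≤ 4 * (1 - cos s ^ 2) * cos s := by
    rw [← sin_sq, ← h]
    exact mul_le_of_le_one_right (by positivity) (cos_le_one d)
  have hcos : cos s = √3 / 3 := by
    have hpos : 0 < cos s + 2 * √3 / 3 := by positivity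
    have : (cos s - √3 / 3) ^ 2 = 0 := by nlinarith [sq_nonneg (cos s - √3 / 3)]
    linarith [pow_eq_zero_iff (n := 2) (by norm_num) |>.1 this]
  have hsin : sin s = √6 / 3 := by
    refine (sq_eq_sq₀ hs (by positivity)).1 ?_
    rw [sin_sq, hcos]
    linear_combination (-h3 - h6) / 9
  refine ⟨hsin, hcos, ?_⟩
  rw [hsin, hcos] at h
  have : 8 * √3 / 9 * (cos d - 1) = 0 := by linear_combination h - 4 * √3 * cos d / 27 * h6
  linarith [(mul_eq_zero.1 this).resolve_left (by positivity)]

section Angles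

variable {α β γ : ℝ}

theorem sin_mul_add_sin_eq_of_add_add_eq_pi (h : α + β + γ = π) :
    sin γ * (sin α + sin β) =
      4 * sin ((α + β) / 2) ^ 2 * cos ((α + β) / 2) * cos ((α - β) / 2) := by
  have key : sin (π - 2 * ((α + β) / 2)) *
      (sin ((α + β) / 2 + (α - β) / 2) + sin ((α + β) / 2 - (α - β) / 2)) =
        4 * sin ((α + β) / 2) ^ 2 * cos ((α + β) / 2) * cos ((α - β) / 2) := by
    rw [sin_pi_sub, sin_two_mul, sin_add, sin_sub]
    ring
  rwa [show π - 2 * ((α + β) / 2) = γ by linarith, show (α + β) / 2 + (α - β) / 2 = α by ring,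
    show (α + β) / 2 - (α - β) / 2 = β by ring] at key

theorem sin_mul_add_sin_le (hα : 0 ≤ α) (hβ : 0 ≤ β) (hγ : 0 ≤ γ) (h : α + β + γ = π) :
    sin γ * (sin α + sin β) ≤ 8 * √3 / 9 := by
  rw [sin_mul_add_sin_eq_of_add_add_eq_pi h]
  exact four_mul_sin_sq_mul_cos_mul_cos_le (cos_nonneg_of_mem_Icc ⟨by linarith, by linarith⟩)

theorem sin_eq_of_sin_mul_add_sin_eq (hα : 0 ≤ α) (hβ : 0 ≤ β) (hγ : 0 ≤ γ)
    (h : α + β + γ = π) (heq : sin γ * (sin α + sin β) = 8 * √3 / 9) :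
    sin α = √6 / 3 ∧ sin β = √6 / 3 ∧ sin γ = 2 * √2 / 3 := by
  rw [sin_mul_add_sin_eq_of_add_add_eq_pi h] at heq
  obtain ⟨hs, hc, hd⟩ := eq_of_four_mul_sin_sq_mul_cos_mul_cos_eq
    (sin_nonneg_of_nonneg_of_le_pi (by linarith) (by linarith))
    (cos_nonneg_of_mem_Icc ⟨by linarith, by linarith⟩) heq
  have hd' : sin ((α - β) / 2) = 0 := by nlinarith [sin_sq_add_cos_sq ((α - β) / 2)]
  have hα' : α = (α + β) / 2 + (α - β) / 2 := by ring
  have hβ' : β = (α + β) / 2 - (α - β) / 2 := by ring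
  have hγ' : γ = π - 2 * ((α + β) / 2) := by linarith
  refine ⟨?_, ?_, ?_⟩
  · rw [hα', sin_add, hs, hd, hd']; ring
  · rw [hβ', sin_sub, hs, hd, hd']; ring
  · have h23 : √2 * √3 = √6 := by rw [← sqrt_mul (by norm_num)]; norm_num
    rw [hγ', sin_pi_sub, sin_two_mul, hs, hc, ← h23]
    linear_combination 2 * √2 / 9 * sq_sqrt (show (0 : ℝ) ≤ 3 by norm_num)

end Angles

section Altitude

variable {V P : Type*} [NormedAddCommGroup V] [InnerProductSpace ℝ V] [MetricSpace P]
  [NormedAddTorsor V P]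

theorem InnerProductGeometry.norm_sub_smul_eq_norm_mul_sin_angle {u v : V} {t : ℝ} (hv : v ≠ 0)
    (hperp : inner ℝ (u - t • v) v = 0) : ‖u - t • v‖ = ‖u‖ * sin (angle u v) := by
  have hinner : inner ℝ u v = t * ‖v‖ ^ 2 := by
    rwa [inner_sub_left, real_inner_smul_left, real_inner_self_eq_norm_sq, sub_eq_zero] at hperp
  have hcos : ‖u‖ * cos (angle u v) = t * ‖v‖ := by
    apply mul_right_cancel₀ (norm_ne_zero_iff.2 hv)
    linear_combination cos_angle_mul_norm_mul_norm u v + hinner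
  refine (sq_eq_sq₀ (norm_nonneg _) (mul_nonneg (norm_nonneg _) (sin_angle_nonneg u v))).1 ?_
  rw [@norm_sub_sq_real, real_inner_smul_right, norm_smul, hinner, Real.norm_eq_abs, mul_pow,
    sq_abs]
  linear_combination (-‖u‖ ^ 2) * sin_sq_add_cos_sq (angle u v) +
    (‖u‖ * cos (angle u v) + t * ‖v‖) * hcos

theorem EuclideanGeometry.infDist_affineSpan_pair_eq_dist_mul_sin_angle (p : P) {a c : P}
    (hac : a ≠ c) : infDist p line[ℝ, a, c] = dist p a * sin (∠ p a c) := by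
  rw [← dist_orthogonalProjection_eq_infDist]
  set F : P := ↑(orthogonalProjection line[ℝ, a, c] p)
  obtain ⟨t, ht⟩ : ∃ t : ℝ, t • (c -ᵥ a) = F -ᵥ a :=
    vadd_left_mem_affineSpan_pair.1 (by rw [vsub_vadd]; exact orthogonalProjection_mem p)
  have hperp : inner ℝ (p -ᵥ F) (c -ᵥ a) = 0 := by
    refine Submodule.inner_left_of_mem_orthogonal ?_
      (vsub_orthogonalProjection_mem_direction_orthogonal _ p)
    rw [direction_affineSpan]
    exact vsub_mem_vectorSpan ℝ (by simp) (by simp)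
  have hpF : p -ᵥ F = (p -ᵥ a) - t • (c -ᵥ a) := by rw [ht, vsub_sub_vsub_cancel_right]
  rw [hpF] at hperp
  rw [dist_eq_norm_vsub V, dist_eq_norm_vsub V, hpF]
  exact InnerProductGeometry.norm_sub_smul_eq_norm_mul_sin_angle (vsub_ne_zero.2 hac.symm) hperp

theorem Affine.Simplex.height_eq_infDist {n : ℕ} [NeZero n] (s : Simplex ℝ P n)
    (i : Fin (n + 1)) : s.height i = infDist (s.points i) (affineSpan ℝ (s.points '' {i}ᶜ)) := by
  rw [height, altitudeFoot, orthogonalProjectionSpan, dist_orthogonalProjection_eq_infDist,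
    range_faceOpposite_points]

end Altitude

theorem Fin.compl_singleton_eq_pair {i j k : Fin 3} (hij : i ≠ j) (hik : i ≠ k) (hjk : j ≠ k) :
    ({i}ᶜ : Set (Fin 3)) = {j, k} := by
  ext x
  simp only [Set.mem_compl_iff, Set.mem_singleton_iff, Set.mem_insert_iff]
  omega

namespace Affine.Triangle

variable {V P : Type*} [NormedAddCommGroup V] [InnerProductSpace ℝ V] [MetricSpace P]
  [NormedAddTorsor V P] (t : Triangle ℝ P) {i j k : Fin 3}

theorem dist_eq_two_mul_circumradius_mul_sin_angle (hij : i ≠ j) (hik : i ≠ k) (hjk : j ≠ k) :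
    dist (t.points i) (t.points k) =
      2 * t.circumradius * sin (∠ (t.points i) (t.points j) (t.points k)) := by
  have hncol : ¬ Collinear ℝ {t.points i, t.points j, t.points k} :=
    (affineIndependent_iff_not_collinear_of_ne hij hik hjk).1 t.independent
  rw [← t.dist_div_sin_angle_eq_two_mul_circumradius hij hik hjk,
    div_mul_cancel₀ _ (sin_ne_zero_of_not_collinear hncol)]

theorem angle_add_angle_add_angle_eq_pi (hij : i ≠ j) :
    ∠ (t.points j) (t.points i) (t.points k) + ∠ (t.points i) (t.points j) (t.points k) +
      ∠ (t.points i) (t.points k) (t.points j) = π := by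
  rw [angle_comm (t.points j) (t.points i), angle_comm (t.points i) (t.points k)]
  linarith [EuclideanGeometry.angle_add_angle_add_angle_eq_pi (t.points k)
    (t.independent.injective.ne hij.symm)]

theorem height_eq_two_mul_circumradius_mul_sin_mul_sin (hij : i ≠ j) (hik : i ≠ k)
    (hjk : j ≠ k) :
    t.height i = 2 * t.circumradius * sin (∠ (t.points i) (t.points k) (t.points j)) *
      sin (∠ (t.points i) (t.points j) (t.points k)) := by
  rw [t.height_eq_infDist, Fin.compl_singleton_eq_pair hij hik hjk, Set.image_pair,
    infDist_affineSpan_pair_eq_dist_mul_sin_angle _ (t.independent.injective.ne hjk),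
    t.dist_eq_two_mul_circumradius_mul_sin_angle hik hij hjk.symm]

theorem height_add_height_eq (hij : i ≠ j) (hik : i ≠ k) (hjk : j ≠ k) :
    t.height i + t.height j = 2 * t.circumradius *
      (sin (∠ (t.points i) (t.points k) (t.points j)) *
        (sin (∠ (t.points j) (t.points i) (t.points k)) +
          sin (∠ (t.points i) (t.points j) (t.points k)))) := by
  rw [t.height_eq_two_mul_circumradius_mul_sin_mul_sin hij hik hjk,
    t.height_eq_two_mul_circumradius_mul_sin_mul_sin hij.symm hjk hik,
    angle_comm (t.points j) (t.points k)]
  ring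

theorem height_add_height_le (hij : i ≠ j) (hik : i ≠ k) (hjk : j ≠ k) :
    t.height i + t.height j ≤ 16 * √3 / 9 * t.circumradius := by
  have hsin := sin_mul_add_sin_le (angle_nonneg _ _ _) (angle_nonneg _ _ _) (angle_nonneg _ _ _)
    (t.angle_add_angle_add_angle_eq_pi (k := k) hij)
  calc t.height i + t.height j ≤ 2 * t.circumradius * (8 * √3 / 9) := by
        rw [t.height_add_height_eq hij hik hjk]
        exact mul_le_mul_of_nonneg_left hsin (mul_nonneg zero_le_two t.circumradius_nonneg)
    _ = 16 * √3 / 9 * t.circumradius := by ring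

theorem dist_eq_of_height_add_height_eq (hij : i ≠ j) (hik : i ≠ k) (hjk : j ≠ k)
    (h : t.height i + t.height j = 16 * √3 / 9 * t.circumradius) :
    dist (t.points k) (t.points i) = 2 * √6 / 3 * t.circumradius ∧
      dist (t.points k) (t.points j) = 2 * √6 / 3 * t.circumradius ∧
      dist (t.points i) (t.points j) = 4 * √2 / 3 * t.circumradius := by
  rw [t.height_add_height_eq hij hik hjk] at h
  have hf : sin (∠ (t.points i) (t.points k) (t.points j)) *
      (sin (∠ (t.points j) (t.points i) (t.points k)) +
        sin (∠ (t.points i) (t.points j) (t.points k))) = 8 * √3 / 9 := by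
    have hR := t.circumradius_pos
    apply mul_left_cancel₀ (by positivity : 2 * t.circumradius ≠ 0)
    linear_combination h
  obtain ⟨hα, hβ, hγ⟩ := sin_eq_of_sin_mul_add_sin_eq (angle_nonneg _ _ _) (angle_nonneg _ _ _)
    (angle_nonneg _ _ _) (t.angle_add_angle_add_angle_eq_pi hij) hf
  rw [dist_comm, t.dist_eq_two_mul_circumradius_mul_sin_angle hij hik hjk, hβ, dist_comm,
    t.dist_eq_two_mul_circumradius_mul_sin_angle hij.symm hjk hik, hα,
    t.dist_eq_two_mul_circumradius_mul_sin_angle hik hij hjk.symm, hγ]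
  exact ⟨by ring, by ring, by ring⟩

theorem circumradius_eq_of_dist_eq_s11 (hij : i ≠ j) (hik : i ≠ k) (hjk : j ≠ k) {r : ℝ}
    (hki : dist (t.points k) (t.points i) = 2 * √6 / 3 * r)
    (hkj : dist (t.points k) (t.points j) = 2 * √6 / 3 * r)
    (hij' : dist (t.points i) (t.points j) = 4 * √2 / 3 * r) :
    t.circumradius = r := by
  have h2 : √2 ^ 2 = 2 := sq_sqrt (by norm_num)
  have h6 : √6 ^ 2 = 6 := sq_sqrt (by norm_num)
  have hr : r ≠ 0 := by
    rintro rfl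
    exact t.independent.injective.ne hij (dist_eq_zero.1 (by simpa using hij'))
  have hcos : cos (∠ (t.points i) (t.points k) (t.points j)) = 1 / 3 := by
    have hlaw := law_cos (t.points i) (t.points k) (t.points j)
    rw [dist_comm (t.points i) (t.points k), dist_comm (t.points j) (t.points k), hki, hkj,
      hij'] at hlaw
    apply mul_left_cancel₀ (by positivity : 48 / 9 * r ^ 2 ≠ 0)
    linear_combination hlaw - 16 / 9 * r ^ 2 * h2 +
      8 / 9 * r ^ 2 * (1 - cos (∠ (t.points i) (t.points k) (t.points j))) * h6
  have hsin : sin (∠ (t.points i) (t.points k) (t.points j)) = 2 * √2 / 3 := by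
    refine (sq_eq_sq₀ (sin_nonneg_of_nonneg_of_le_pi (angle_nonneg _ _ _) (angle_le_pi _ _ _))
      (by positivity)).1 ?_
    rw [sin_sq, hcos]
    linear_combination (-4 / 9) * h2
  have hlaw := t.dist_eq_two_mul_circumradius_mul_sin_angle hik hij hjk.symm
  rw [hij', hsin] at hlaw
  have : 4 * √2 / 3 * (t.circumradius - r) = 0 := by linear_combination -hlaw
  linarith [(mul_eq_zero.1 this).resolve_left (by positivity)]

end Affine.Triangle

theorem stmt11_general (l : ℝ)
    (s : Affine.Simplex ℝ (EuclideanSpace ℝ (Fin 2)) 2)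
    (halt : ∃ i j : Fin 3, i ≠ j ∧
      2 * l ≤ infDist (s.points i) (affineSpan ℝ (s.points '' {i}ᶜ) : Set (EuclideanSpace ℝ (Fin 2))) ∧
      2 * l ≤ infDist (s.points j) (affineSpan ℝ (s.points '' {j}ᶜ) : Set (EuclideanSpace ℝ (Fin 2)))) :
    3 * Real.sqrt 3 * l / 4 ≤ s.circumradius ∧
    (s.circumradius = 3 * Real.sqrt 3 * l / 4 ↔
      ∃ i j k : Fin 3, i ≠ j ∧ i ≠ k ∧ j ≠ k ∧
        dist (s.points i) (s.points j) = 3 * l / Real.sqrt 2 ∧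
        dist (s.points i) (s.points k) = 3 * l / Real.sqrt 2 ∧
        dist (s.points j) (s.points k) = Real.sqrt 6 * l) := by
  obtain ⟨i, j, hij, hi, hj⟩ := halt
  obtain ⟨k, hik, hjk⟩ : ∃ k, i ≠ k ∧ j ≠ k := (by decide : ∀ i j : Fin 3, ∃ k, i ≠ k ∧ j ≠ k) i j
  rw [← s.height_eq_infDist] at hi hj
  have hle := Affine.Triangle.height_add_height_le s hij hik hjk
  have h2 : √2 ^ 2 = 2 := sq_sqrt (by norm_num)
  have h3 : √3 ^ 2 = 3 := sq_sqrt (by norm_num)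
  have h23 : √2 * √3 = √6 := by rw [← sqrt_mul (by norm_num)]; norm_num
  have hscale : 16 * √3 / 9 * (3 * √3 * l / 4) = 4 * l := by linear_combination 4 / 3 * l * h3
  have hleg : 3 * l / √2 = 2 * √6 / 3 * (3 * √3 * l / 4) := by
    rw [div_eq_iff (by positivity), ← h23]
    linear_combination (-l / 2 * √3 ^ 2) * h2 - l * h3
  have hbase : √6 * l = 4 * √2 / 3 * (3 * √3 * l / 4) := by rw [← h23]; ring
  refine ⟨le_of_mul_le_mul_left (by linarith) (by positivity : (0 : ℝ) < 16 * √3 / 9),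
    fun hR => ?_, ?_⟩
  · obtain ⟨hki, hkj, hij'⟩ := Affine.Triangle.dist_eq_of_height_add_height_eq s hij hik hjk
      (le_antisymm hle (by rw [hR, hscale]; linarith))
    rw [hR, ← hleg] at hki hkj
    rw [hR, ← hbase] at hij'
    exact ⟨k, i, j, hik.symm, hjk.symm, hij, hki, hkj, hij'⟩
  · rintro ⟨a, b, c, hab, hac, hbc, hdab, hdac, hdbc⟩
    rw [hleg] at hdab hdac
    rw [hbase] at hdbc
    exact Affine.Triangle.circumradius_eq_of_dist_eq_s11 s hbc hab.symm hac.symm hdab hdac hdbc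

/-- For `2√2/3 ≤ λ ≤ 1`: a non-obtuse triangle (one containing its circumcenter)
with side lengths at least `2` and at least two altitudes of length at least `2λ` has
circumradius at least `3√3·λ/4`, with equality iff the triangle is congruent to the
isosceles triangle with legs `3λ/√2` and base `√6·λ`. -/
theorem stmt11 (l : ℝ) (hl0 : 2 * Real.sqrt 2 / 3 ≤ l) (hl : l ≤ 1)
    (s : Affine.Simplex ℝ (EuclideanSpace ℝ (Fin 2)) 2)
    (hcc : s.circumcenter ∈ convexHull ℝ (Set.range s.points))
    (hside : ∀ i j : Fin 3, i ≠ j → 2 ≤ dist (s.points i) (s.points j))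
    (halt : ∃ i j : Fin 3, i ≠ j ∧
      2 * l ≤ infDist (s.points i) (affineSpan ℝ (s.points '' {i}ᶜ) : Set (EuclideanSpace ℝ (Fin 2))) ∧
      2 * l ≤ infDist (s.points j) (affineSpan ℝ (s.points '' {j}ᶜ) : Set (EuclideanSpace ℝ (Fin 2)))) :
    3 * Real.sqrt 3 * l / 4 ≤ s.circumradius ∧
    (s.circumradius = 3 * Real.sqrt 3 * l / 4 ↔
      ∃ i j k : Fin 3, i ≠ j ∧ i ≠ k ∧ j ≠ k ∧
        dist (s.points i) (s.points j) = 3 * l / Real.sqrt 2 ∧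
        dist (s.points i) (s.points k) = 3 * l / Real.sqrt 2 ∧
        dist (s.points j) (s.points k) = Real.sqrt 6 * l) :=
  stmt11_general l s halt
end

section
/- Let 0 ≤ λ ≤ ρ with ρ > 0, and let T be an isosceles Euclidean triangle with base 2y and legs 2x (0 < x, y) such that the line through the midpoint of the base and the midpoint of one leg is at distance exactly λ from all three vertices. Then x = y²/(2√(y² − λ²)). -/
open Real RealInnerProductSpace

/-- If the Euclidean isosceles triangle with apex `p`, base vertices `q₁,q₂`, base
length `2y` and legs `2x` has the property that the line through the midpoints of
`[q₁,q₂]` and `[p,q₁]` is at distance exactly `λ` from all three vertices (with `p` and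
`q₁` on opposite sides), then `x = y²/(2√(y²−λ²))`.  The line is encoded as
`{z | ⟪n,z⟫ = t}` with `n ≠ 0`; the distance of a point `z` from it is `|⟪n,z⟫−t|/‖n‖`. -/
theorem stmt13 (l ρ x y : ℝ) (hl0 : 0 ≤ l) (hlρ : l ≤ ρ) (hρ : 0 < ρ)
    (hx : 0 < x) (hy : 0 < y)
    (p q1 q2 : EuclideanSpace ℝ (Fin 2))
    (hbase : dist q1 q2 = 2 * y) (hleg1 : dist p q1 = 2 * x) (hleg2 : dist p q2 = 2 * x)
    (n : EuclideanSpace ℝ (Fin 2)) (t : ℝ) (hn : n ≠ 0)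
    (hm1 : ⟪n, midpoint ℝ q1 q2⟫ = t) (hm2 : ⟪n, midpoint ℝ p q1⟫ = t)
    (hp : ⟪n, p⟫ - t = l * ‖n‖)
    (hq1 : ⟪n, q1⟫ - t = -(l * ‖n‖))
    (hq2 : ⟪n, q2⟫ - t = l * ‖n‖ ∨ ⟪n, q2⟫ - t = -(l * ‖n‖)) :
    x = y ^ 2 / (2 * Real.sqrt (y ^ 2 - l ^ 2)) := by
  -- basic facts about the ambient space
  have hinner : ∀ z : EuclideanSpace ℝ (Fin 2), ⟪n, z⟫ = n 0 * z 0 + n 1 * z 1 := by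
    intro z
    simp [PiLp.inner_apply, Fin.sum_univ_two, mul_comm]
  have hdist : ∀ z w : EuclideanSpace ℝ (Fin 2),
      dist z w = Real.sqrt ((z 0 - w 0)^2 + (z 1 - w 1)^2) := by
    intro z w
    rw [EuclideanSpace.dist_eq, Fin.sum_univ_two]
    simp [Real.dist_eq, sq_abs]
  have hN2 : ‖n‖^2 = n 0^2 + n 1^2 := by
    rw [EuclideanSpace.norm_eq, Fin.sum_univ_two, Real.sq_sqrt (by positivity)]
    simp [Real.norm_eq_abs, sq_abs]
  -- the third vertex is at signed distance  l‖n‖  as well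
  have hmid : ⟪n, midpoint ℝ q1 q2⟫ = (⟪n,q1⟫ + ⟪n,q2⟫)/2 := by
    rw [midpoint_eq_smul_add, real_inner_smul_right, inner_add_right, invOf_eq_inv]; ring
  have iq2 : ⟪n, q2⟫ - t = l * ‖n‖ := by
    rw [hmid] at hm1; linarith
  -- squared side lengths
  have e1 : (q1 0 - q2 0)^2 + (q1 1 - q2 1)^2 = (2*y)^2 := by
    rw [← Real.sq_sqrt (show (0:ℝ) ≤ (q1 0 - q2 0)^2 + (q1 1 - q2 1)^2 by positivity),
      ← hdist q1 q2, hbase]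
  have e2 : (p 0 - q1 0)^2 + (p 1 - q1 1)^2 = (2*x)^2 := by
    rw [← Real.sq_sqrt (show (0:ℝ) ≤ (p 0 - q1 0)^2 + (p 1 - q1 1)^2 by positivity),
      ← hdist p q1, hleg1]
  have e3 : (p 0 - q2 0)^2 + (p 1 - q2 1)^2 = (2*x)^2 := by
    rw [← Real.sq_sqrt (show (0:ℝ) ≤ (p 0 - q2 0)^2 + (p 1 - q2 1)^2 by positivity),
      ← hdist p q2, hleg2]
  -- components along n
  rw [hinner] at hp hq1 iq2
  have d1 : n 0*(q1 0 - q2 0) + n 1*(q1 1 - q2 1) = -(2*l*‖n‖) := by linarith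
  have d2 : n 0*(p 0 - q1 0) + n 1*(p 1 - q1 1) = 2*l*‖n‖ := by linarith
  have d3 : n 0*(p 0 - q2 0) + n 1*(p 1 - q2 1) = 0 := by linarith
  have d1sq : (n 0*(q1 0 - q2 0) + n 1*(q1 1 - q2 1))^2 = 4*l^2*‖n‖^2 := by rw [d1]; ring
  have d2sq : (n 0*(p 0 - q1 0) + n 1*(p 1 - q1 1))^2 = 4*l^2*‖n‖^2 := by rw [d2]; ring
  have d3sq : (n 0*(p 0 - q2 0) + n 1*(p 1 - q2 1))^2 = 0 := by rw [d3]; ring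
  -- components orthogonal to n
  set B1 : ℝ := -(n 1)*(q1 0 - q2 0) + n 0*(q1 1 - q2 1) with hB1
  set B2 : ℝ := -(n 1)*(p 0 - q1 0) + n 0*(p 1 - q1 1) with hB2
  have f1 : B1^2 = 4*‖n‖^2*(y^2 - l^2) := by
    rw [hB1]; linear_combination (n 0^2 + n 1^2)*e1 - d1sq - 4*y^2*hN2
  have f2 : B2^2 = 4*‖n‖^2*(x^2 - l^2) := by
    rw [hB2]; linear_combination (n 0^2 + n 1^2)*e2 - d2sq - 4*x^2*hN2
  have f3 : (B1 + B2)^2 = 4*‖n‖^2*x^2 := by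
    rw [hB1, hB2]; linear_combination (n 0^2 + n 1^2)*e3 - d3sq - 4*x^2*hN2
  -- eliminate B1, B2
  have h2 : 2*(B1*B2) = 4*‖n‖^2*(2*l^2 - y^2) := by linear_combination f3 - f1 - f2
  have h3 : (2*(B1*B2))^2 = (4*‖n‖^2*(2*l^2 - y^2))^2 := by rw [h2]
  have h4 : B1^2*B2^2 = 16*‖n‖^4*((y^2 - l^2)*(x^2 - l^2)) := by
    rw [f1, f2]; ring
  have h5 : 16*‖n‖^4 * (4*((y^2 - l^2)*(x^2 - l^2)) - (2*l^2 - y^2)^2) = 0 := by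
    linear_combination h3 - 4*h4
  have hNpos : (0:ℝ) < ‖n‖ := norm_pos_iff.mpr hn
  have hNne : (16:ℝ)*‖n‖^4 ≠ 0 := by positivity
  have key' : 4*((y^2 - l^2)*(x^2 - l^2)) - (2*l^2 - y^2)^2 = 0 :=
    (mul_eq_zero.mp h5).resolve_left hNne
  have key : y^4 = 4*x^2*(y^2 - l^2) := by linear_combination -key'
  -- conclude
  have hyl : 0 < y^2 - l^2 := by
    have h6 : 0 < 4*x^2*(y^2 - l^2) := by
      rw [← key]; positivity
    have h7 : (0:ℝ) < 4*x^2 := by positivity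
    exact (mul_pos_iff_of_pos_left h7).mp h6
  have hsq : Real.sqrt (y^2 - l^2) = y^2/(2*x) := by
    have hval : y^2 - l^2 = (y^2/(2*x))^2 := by
      rw [div_pow, eq_div_iff (by positivity)]
      linear_combination -key
    rw [hval]
    exact Real.sqrt_sq (by positivity)
  rw [hsq]
  field_simp
end

section
/- Let 0 < λ ≤ π/4 and arcsin(tan λ) ≤ y < π/2, and consider an isosceles spherical triangle with apex p, base vertices q₁, q₂, base length 2y and legs of length 2x, such that the great circle through the midpoints of [q₁,q₂] and [p,q₁] is at spherical distance λ from p, q₁ and q₂. Then sin(2x) = cos λ · sin² y / √(sin² y − sin² λ). -/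
open Real RealInnerProductSpace

/-! Four vectors `n, p, q₁, q₂` in `ℝ³` are linearly dependent, so their Gram matrix is singular.
All its entries are prescribed by the hypotheses, and expanding the determinant gives
`sin² 2x · (sin² y − sin² λ) = cos² λ · sin⁴ y`. The sign conditions `sin 2x > 0`, `cos λ > 0`
and `sin λ < tan λ ≤ sin y` then single out the stated root. -/

theorem Matrix.det_gram_eq_zero_of_finrank_lt {𝕜 E ι : Type*} [RCLike 𝕜]
    [NormedAddCommGroup E] [InnerProductSpace 𝕜 E] [FiniteDimensional 𝕜 E]
    [Fintype ι] [DecidableEq ι] (v : ι → E) (h : Module.finrank 𝕜 E < Fintype.card ι) :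
    (Matrix.gram 𝕜 v).det = 0 := by
  by_contra hdet
  exact (Matrix.det_gram_ne_zero_iff_linearIndependent.mp hdet).fintype_card_le_finrank.not_gt h

theorem det_isosceles_gram (s a b : ℝ) :
    !![1, s, -s, s; s, 1, a, a; -s, a, 1, b; s, a, b, 1].det =
      2 * (1 - a ^ 2) * (1 - b - 2 * s ^ 2) - (1 - b) ^ 2 * (1 - s ^ 2) := by
  simp [Matrix.det_succ_row_zero, Fin.sum_univ_succ, Fin.succAbove]
  ring

theorem sin_two_mul_sq_mul_eq_of_inner {E : Type*} [NormedAddCommGroup E]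
    [InnerProductSpace ℝ E] [FiniteDimensional ℝ E] (hE : Module.finrank ℝ E ≤ 3)
    {l x y : ℝ} {n p q1 q2 : E}
    (hnu : ‖n‖ = 1) (hpu : ‖p‖ = 1) (hq1u : ‖q1‖ = 1) (hq2u : ‖q2‖ = 1)
    (hbase : ⟪q1, q2⟫ = cos (2 * y))
    (hleg1 : ⟪p, q1⟫ = cos (2 * x)) (hleg2 : ⟪p, q2⟫ = cos (2 * x))
    (hp : ⟪n, p⟫ = sin l) (hq1 : ⟪n, q1⟫ = -sin l) (hq2 : ⟪n, q2⟫ = sin l) :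
    sin (2 * x) ^ 2 * (sin y ^ 2 - sin l ^ 2) = cos l ^ 2 * sin y ^ 4 := by
  have hunit : ∀ u : E, ‖u‖ = 1 → ⟪u, u⟫ = 1 := fun u hu => by
    rw [real_inner_self_eq_norm_sq, hu, one_pow]
  have hgram : Matrix.gram ℝ ![n, p, q1, q2] =
      !![1, sin l, -sin l, sin l; sin l, 1, cos (2 * x), cos (2 * x);
        -sin l, cos (2 * x), 1, cos (2 * y); sin l, cos (2 * x), cos (2 * y), 1] := by
    ext i j
    fin_cases i <;> fin_cases j
    all_goals simp only [Matrix.gram_apply, Matrix.of_apply, Matrix.cons_val',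
      Matrix.empty_val', Matrix.cons_val_fin_one]
    all_goals first
      | exact hunit _ ‹_›
      | assumption
      | (rw [real_inner_comm]; assumption)
  have hdet := Matrix.det_gram_eq_zero_of_finrank_lt (𝕜 := ℝ) ![n, p, q1, q2]
    (by simpa using hE.trans_lt (by norm_num))
  have hcos : cos (2 * y) = 1 - 2 * sin y ^ 2 := by rw [cos_two_mul', cos_sq']; ring
  rw [hgram, det_isosceles_gram, hcos] at hdet
  linear_combination hdet / 4 + (sin y ^ 2 - sin l ^ 2) * sin_sq_add_cos_sq (2 * x)
    - sin y ^ 4 * sin_sq_add_cos_sq l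

theorem sin_lt_sin_of_arcsin_tan_le {l y : ℝ} (hl : 0 < l) (hl2 : l < π / 2)
    (hy1 : arcsin (tan l) ≤ y) (hy2 : y < π / 2) : sin l < sin y := by
  have hy0 : 0 ≤ y := (arcsin_nonneg.mpr (tan_pos_of_pos_of_lt_pi_div_two hl hl2).le).trans hy1
  calc sin l < l := sin_lt hl
    _ < tan l := lt_tan hl hl2
    _ ≤ sin y := (arcsin_le_iff_le_sin' ⟨by linarith [pi_pos], hy2⟩).mp hy1

theorem eq_div_sqrt_of_sq_mul_eq {a b d : ℝ} (ha : 0 ≤ a) (hb : 0 ≤ b) (hd : 0 < d)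
    (h : a ^ 2 * d = b ^ 2) : a = b / √d := by
  have hsqrt : 0 < √d := sqrt_pos.mpr hd
  rw [eq_div_iff hsqrt.ne']
  refine (pow_left_inj₀ (mul_nonneg ha hsqrt.le) hb two_ne_zero).mp ?_
  rw [mul_pow, sq_sqrt hd.le, h]

theorem stmt14_general (l x y : ℝ) (hl : 0 < l) (hl4 : l ≤ π / 4)
    (hy1 : arcsin (tan l) ≤ y) (hy2 : y < π / 2)
    (hx0 : 0 < x) (hx2 : x < π / 2)
    (p q1 q2 n : EuclideanSpace ℝ (Fin 3))
    (hpu : ‖p‖ = 1) (hq1u : ‖q1‖ = 1) (hq2u : ‖q2‖ = 1) (hnu : ‖n‖ = 1)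
    (hbase : ⟪q1, q2⟫ = Real.cos (2 * y))
    (hleg1 : ⟪p, q1⟫ = Real.cos (2 * x))
    (hleg2 : ⟪p, q2⟫ = Real.cos (2 * x))
    (hmid1 : ⟪n, q1 + q2⟫ = 0)
    (hp : ⟪n, p⟫ = Real.sin l)
    (hq1 : ⟪n, q1⟫ = -Real.sin l) :
    Real.sin (2 * x) = Real.cos l * Real.sin y ^ 2 / Real.sqrt (Real.sin y ^ 2 - Real.sin l ^ 2) := by
  have hl2 : l < π / 2 := by linarith [pi_pos]
  have hq2 : ⟪n, q2⟫ = sin l := by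
    rw [inner_add_right, hq1] at hmid1
    linarith
  have key :=
    sin_two_mul_sq_mul_eq_of_inner (by simp) hnu hpu hq1u hq2u hbase hleg1 hleg2 hp hq1 hq2
  have hsin : sin l ^ 2 < sin y ^ 2 := pow_lt_pow_left₀
    (sin_lt_sin_of_arcsin_tan_le hl hl2 hy1 hy2) (sin_pos_of_pos_of_lt_pi hl (by linarith)).le
    two_ne_zero
  refine eq_div_sqrt_of_sq_mul_eq (sin_pos_of_pos_of_lt_pi (by positivity) (by linarith)).le
    (mul_nonneg (cos_pos_of_mem_Ioo ⟨by linarith, hl2⟩).le (sq_nonneg _)) (sub_pos.mpr hsin) ?_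
  linear_combination key

/-- Spherical version: on the unit sphere `S² ⊆ ℝ³`, consider an isosceles spherical
triangle with apex `p`, base vertices `q₁,q₂`, base length `2y` and legs `2x` (encoded
by inner products: spherical distance `d(u,v)` satisfies `cos d = ⟪u,v⟫`).  Assume a
great circle (the intersection of `S²` with the plane `{z | ⟪n,z⟫ = 0}` for a unit
vector `n`) passes through the spherical midpoints of `[q₁,q₂]` and `[p,q₁]` and lies at
spherical distance `λ` from `p`, `q₁` and `q₂` (with `p` and `q₁` on opposite sides;
the distance of a unit vector `u` from the great circle is `arcsin |⟪n,u⟫|`).  Then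
`sin 2x = cos λ · sin² y / √(sin² y − sin² λ)`. -/
theorem stmt14 (l x y : ℝ) (hl : 0 < l) (hl4 : l ≤ π / 4)
    (hy1 : arcsin (tan l) ≤ y) (hy2 : y < π / 2)
    (hx0 : 0 < x) (hx2 : x < π / 2)
    (p q1 q2 n : EuclideanSpace ℝ (Fin 3))
    (hpu : ‖p‖ = 1) (hq1u : ‖q1‖ = 1) (hq2u : ‖q2‖ = 1) (hnu : ‖n‖ = 1)
    (hbase : ⟪q1, q2⟫ = Real.cos (2 * y))
    (hleg1 : ⟪p, q1⟫ = Real.cos (2 * x))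
    (hleg2 : ⟪p, q2⟫ = Real.cos (2 * x))
    (hmid1 : ⟪n, q1 + q2⟫ = 0) (hmid2 : ⟪n, p + q1⟫ = 0)
    (hp : ⟪n, p⟫ = Real.sin l)
    (hq1 : ⟪n, q1⟫ = -Real.sin l)
    (hq2 : ⟪n, q2⟫ = Real.sin l ∨ ⟪n, q2⟫ = -Real.sin l) :
    Real.sin (2 * x) = Real.cos l * Real.sin y ^ 2 / Real.sqrt (Real.sin y ^ 2 - Real.sin l ^ 2) :=
  stmt14_general l x y hl hl4 hy1 hy2 hx0 hx2 p q1 q2 n hpu hq1u hq2u hnu hbase hleg1 hleg2 hmid1 hp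
    hq1
end

section
/- Let 0 < λ < π/4 and 0 < λ ≤ arcsin(3/5). For arcsin(tan λ) ≤ y ≤ π/4, let x₁(y) be defined by sin(2x₁(y)) = cos λ sin² y/√(sin² y − sin² λ) and x₁(y) ≤ π/4. Then the condition x₁(y) ≥ y holds if and only if sin² y ≤ (3 + 5 sin² λ − √(9 − 34 sin² λ + 25 sin⁴ λ))/8 or sin² y ≥ (3 + 5 sin² λ + √(9 − 34 sin² λ + 25 sin⁴ λ))/8. -/
open Real

lemma quadroots (a t s : ℝ) (hs0 : 0 ≤ s) (hs2 : s ^ 2 = 9 - 34 * a + 25 * a ^ 2) :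
    (0 ≤ 4 * t ^ 2 - (3 + 5 * a) * t + 4 * a) ↔
      (t ≤ (3 + 5 * a - s) / 8 ∨ (3 + 5 * a + s) / 8 ≤ t) := by
  constructor
  · intro h
    by_contra hc
    push_neg at hc
    nlinarith [mul_pos (sub_pos.2 hc.1) (sub_pos.2 hc.2), hs2]
  · rintro (h | h)
    · nlinarith [mul_nonneg (sub_nonneg.2 h)
        (sub_nonneg.2 (show t ≤ (3 + 5 * a + s) / 8 by linarith)), hs2]
    · nlinarith [mul_nonneg (sub_nonneg.2 (show (3 + 5 * a - s) / 8 ≤ t by linarith))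
        (sub_nonneg.2 h), hs2]

set_option maxHeartbeats 1000000 in
/-- For `0 < λ ≤ arcsin(3/5)` and `arcsin(tan λ) ≤ y ≤ π/4`, the condition
`x₁(y) ≥ y`, where `x₁(y) = (1/2)·arcsin(cos λ · sin² y / √(sin² y − sin² λ))`,
holds iff `sin² y` lies below the smaller or above the larger root of
`4t² − (3+5 sin²λ)t + 4 sin²λ`. -/
theorem stmt15 (l y : ℝ) (hl : 0 < l) (hl2 : l ≤ arcsin (3 / 5))
    (hy1 : arcsin (tan l) ≤ y) (hy2 : y ≤ π / 4) :
    y ≤ (1 / 2) * arcsin (cos l * sin y ^ 2 / Real.sqrt (sin y ^ 2 - sin l ^ 2)) ↔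
      (sin y ^ 2 ≤ (3 + 5 * sin l ^ 2 - Real.sqrt (9 - 34 * sin l ^ 2 + 25 * sin l ^ 4)) / 8 ∨
       (3 + 5 * sin l ^ 2 + Real.sqrt (9 - 34 * sin l ^ 2 + 25 * sin l ^ 4)) / 8 ≤ sin y ^ 2) := by
  have hpi : (0:ℝ) < π := pi_pos
  have harc35 : arcsin (3/5) < π/2 := arcsin_lt_pi_div_two.2 (by norm_num)
  have hl3 : l < π/2 := lt_of_le_of_lt hl2 harc35
  have hcosl : 0 < cos l := cos_pos_of_mem_Ioo ⟨by linarith, hl3⟩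
  have hL : sin l ≤ 3/5 := by
    have := sin_le_sin_of_le_of_le_pi_div_two (x := l) (y := arcsin (3/5))
      (by linarith) (arcsin_le_pi_div_two _) hl2
    rwa [sin_arcsin (by norm_num) (by norm_num)] at this
  have hLpos : 0 < sin l := sin_pos_of_pos_of_lt_pi hl (by linarith)
  have hcl : cos l ^ 2 = 1 - sin l ^ 2 := by nlinarith [sin_sq_add_cos_sq l]
  have htan : tan l = sin l / cos l := tan_eq_sin_div_cos l
  have htanpos : 0 < tan l := htan ▸ div_pos hLpos hcosl
  have hcosl1 : cos l < 1 := by nlinarith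
  have htan1 : tan l < 1 := by
    rw [htan, div_lt_one hcosl]
    nlinarith
  -- y bounds
  have hy0 : 0 < y := lt_of_lt_of_le (arcsin_pos.2 htanpos) hy1
  have hy3 : y < π/2 := by linarith
  have hcosy : 0 < cos y := cos_pos_of_mem_Ioo ⟨by linarith, hy3⟩
  have hsiny : 0 < sin y := sin_pos_of_pos_of_lt_pi hy0 (by linarith)
  have hcy : cos y ^ 2 = 1 - sin y ^ 2 := by nlinarith [sin_sq_add_cos_sq y]
  have htanle : tan l ≤ sin y := by
    have := sin_le_sin_of_le_of_le_pi_div_two (x := arcsin (tan l)) (y := y)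
      (neg_pi_div_two_le_arcsin _) hy3.le hy1
    rwa [sin_arcsin (by linarith) htan1.le] at this
  have hkey : sin l ^ 2 < sin y ^ 2 := by
    have h1 : sin l < sin y := by
      calc sin l = tan l * cos l := by rw [htan, div_mul_cancel₀ _ hcosl.ne']
      _ < tan l := by nlinarith
      _ ≤ sin y := htanle
    nlinarith
  have hsub : 0 < sin y ^ 2 - sin l ^ 2 := by linarith
  have hsq : Real.sqrt (sin y ^ 2 - sin l ^ 2) ^ 2 = sin y ^ 2 - sin l ^ 2 :=
    Real.sq_sqrt hsub.le
  have hsqpos : 0 < Real.sqrt (sin y ^ 2 - sin l ^ 2) := Real.sqrt_pos.2 hsub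
  set A := cos l * sin y ^ 2 / Real.sqrt (sin y ^ 2 - sin l ^ 2) with hA
  have hA0 : 0 ≤ A := by positivity
  have hYle : sin y ^ 2 ≤ 1/2 := by
    have h : sin y ≤ sin (π/4) := sin_le_sin_of_le_of_le_pi_div_two (by linarith) (by linarith) hy2
    rw [sin_pi_div_four] at h
    have h2 : sin y ^ 2 ≤ (Real.sqrt 2 / 2) ^ 2 := pow_le_pow_left₀ hsiny.le h 2
    have h3 : (Real.sqrt 2 / 2) ^ 2 = 1/2 := by
      rw [div_pow, Real.sq_sqrt] <;> norm_num
    linarith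
  have htansq : sin l ^ 2 ≤ (1 - sin l ^ 2) * sin y ^ 2 := by
    have h2 : sin l ≤ cos l * sin y := by
      have h3 := mul_le_mul_of_nonneg_right htanle hcosl.le
      rw [htan] at h3
      calc sin l = sin l / cos l * cos l := by rw [div_mul_cancel₀ _ hcosl.ne']
      _ ≤ sin y * cos l := h3
      _ = cos l * sin y := by ring
    nlinarith
  have hA1 : A ≤ 1 := by
    rw [hA, div_le_one hsqpos]
    have h3 : (cos l * sin y ^ 2) ^ 2 ≤ sin y ^ 2 - sin l ^ 2 := by
      have hprod : 0 ≤ (1 - sin y ^ 2) * ((1 - sin l ^ 2) * sin y ^ 2 - sin l ^ 2) :=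
        mul_nonneg (by linarith) (by linarith)
      nlinarith [hprod, hcl]
    calc cos l * sin y ^ 2 = Real.sqrt ((cos l * sin y ^ 2) ^ 2) := by
          rw [Real.sqrt_sq (by positivity)]
      _ ≤ Real.sqrt (sin y ^ 2 - sin l ^ 2) := Real.sqrt_le_sqrt h3
  have hiff1 : y ≤ (1:ℝ)/2 * arcsin A ↔ sin (2*y) ≤ A := by
    rw [show (y ≤ 1/2 * arcsin A) ↔ (2*y ≤ arcsin A) from ⟨fun h => by linarith, fun h => by linarith⟩]
    exact le_arcsin_iff_sin_le ⟨by linarith, by linarith⟩ ⟨by linarith, hA1⟩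
  rw [hiff1, sin_two_mul]
  have hiff2 : 2 * sin y * cos y ≤ A ↔
      0 ≤ 4 * (sin y ^ 2) ^ 2 - (3 + 5 * sin l ^ 2) * sin y ^ 2 + 4 * sin l ^ 2 := by
    rw [hA, le_div_iff₀ hsqpos]
    have ht0 : (0:ℝ) < sin y ^ 2 := by positivity
    have e1 : (2 * sin y * cos y * Real.sqrt (sin y ^ 2 - sin l ^ 2)) ^ 2
        = 4 * sin y ^ 2 * (1 - sin y ^ 2) * (sin y ^ 2 - sin l ^ 2) := by
      rw [mul_pow, hsq]
      linear_combination (4 * sin y ^ 2 * (sin y ^ 2 - sin l ^ 2)) * hcy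
    have e2 : (cos l * sin y ^ 2) ^ 2 = (1 - sin l ^ 2) * (sin y ^ 2) ^ 2 := by
      rw [mul_pow, hcl]
    constructor
    · intro h
      have h2 : (2 * sin y * cos y * Real.sqrt (sin y ^ 2 - sin l ^ 2)) ^ 2
          ≤ (cos l * sin y ^ 2) ^ 2 := pow_le_pow_left₀ (by positivity) h 2
      rw [e1, e2] at h2
      have h3 : 0 ≤ sin y ^ 2 *
          (4 * (sin y ^ 2) ^ 2 - (3 + 5 * sin l ^ 2) * sin y ^ 2 + 4 * sin l ^ 2) := by
        nlinarith [h2]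
      nlinarith [h3, ht0]
    · intro h
      have lhs0 : 0 ≤ 2 * sin y * cos y * Real.sqrt (sin y ^ 2 - sin l ^ 2) := by positivity
      have rhs0 : 0 ≤ cos l * sin y ^ 2 := by positivity
      have hsqcmp : (2 * sin y * cos y * Real.sqrt (sin y ^ 2 - sin l ^ 2)) ^ 2
          ≤ (cos l * sin y ^ 2) ^ 2 := by
        rw [e1, e2]
        nlinarith [mul_nonneg ht0.le h]
      exact (pow_le_pow_iff_left₀ lhs0 rhs0 two_ne_zero).1 hsqcmp
  rw [hiff2]
  have hule : sin l ^ 2 ≤ 9/25 := by nlinarith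
  have hD : 0 ≤ 9 - 34 * sin l ^ 2 + 25 * sin l ^ 4 := by
    have hprod : 0 ≤ (9 - 25 * sin l ^ 2) * (1 - sin l ^ 2) :=
      mul_nonneg (by linarith) (by nlinarith)
    nlinarith [hprod]
  have hs2 : Real.sqrt (9 - 34 * sin l ^ 2 + 25 * sin l ^ 4) ^ 2
      = 9 - 34 * (sin l ^ 2) + 25 * (sin l ^ 2) ^ 2 := by
    rw [Real.sq_sqrt hD]; ring
  exact quadroots (sin l ^ 2) (sin y ^ 2) _ (Real.sqrt_nonneg _) hs2
end

section
/- Let λ > 0, L = sinh λ. The cubic equation Z³ − (2L² + (10/3)L⁴)·Z − (25/27)·L⁶ − (1/3)·L⁴ = 0 has positive discriminant, hence three distinct real roots; exactly two of the three values Z_k + (5/3)L² (where Z_k are the roots) are positive. -/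
open Real

/-- Generic: a monic cubic with three distinct roots has exactly those roots. -/
lemma cubic_root_iff (p q z1 z2 z3 : ℝ) (h12 : z1 ≠ z2) (h13 : z1 ≠ z3) (h23 : z2 ≠ z3)
    (e1 : z1 ^ 3 + p * z1 + q = 0) (e2 : z2 ^ 3 + p * z2 + q = 0)
    (e3 : z3 ^ 3 + p * z3 + q = 0) :
    ∀ z : ℝ, z ^ 3 + p * z + q = 0 ↔ z = z1 ∨ z = z2 ∨ z = z3 := by
  have A0 : (z1 - z2) * (z1 ^ 2 + z1 * z2 + z2 ^ 2 + p) = 0 := by linear_combination e1 - e2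
  have A : z1 ^ 2 + z1 * z2 + z2 ^ 2 + p = 0 :=
    (mul_eq_zero.mp A0).resolve_left (sub_ne_zero.mpr h12)
  have B0 : (z1 - z3) * (z1 ^ 2 + z1 * z3 + z3 ^ 2 + p) = 0 := by linear_combination e1 - e3
  have B : z1 ^ 2 + z1 * z3 + z3 ^ 2 + p = 0 :=
    (mul_eq_zero.mp B0).resolve_left (sub_ne_zero.mpr h13)
  have hs0 : (z2 - z3) * (z1 + z2 + z3) = 0 := by linear_combination A - B
  have hs : z1 + z2 + z3 = 0 := (mul_eq_zero.mp hs0).resolve_left (sub_ne_zero.mpr h23)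
  have hp : p = z1 * z2 + z1 * z3 + z2 * z3 := by linear_combination A - (z1 + z2) * hs
  have hq : q = -(z1 * z2 * z3) := by linear_combination e1 - z1 * hp - z1 ^ 2 * hs
  intro z
  have key : z ^ 3 + p * z + q = (z - z1) * ((z - z2) * (z - z3)) := by
    linear_combination z * hp + hq + z ^ 2 * hs
  rw [key, mul_eq_zero, mul_eq_zero, sub_eq_zero, sub_eq_zero, sub_eq_zero]

/-- Sign bounds for a depressed cubic at `±(1 + P + Q)`. -/
lemma cubic_bounds (P Q : ℝ) (hP : 0 < P) (hQ : 0 < Q) :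
    (-(1 + P + Q)) ^ 3 + (-P) * (-(1 + P + Q)) + (-Q) < 0 ∧
    0 < (1 + P + Q) ^ 3 + (-P) * (1 + P + Q) + (-Q) := by
  constructor <;>
    nlinarith [mul_pos hP hQ, sq_nonneg P, sq_nonneg Q, sq_nonneg (P + Q),
      mul_pos (mul_pos hP hP) hP, mul_pos (mul_pos hQ hQ) hQ, mul_pos (mul_pos hP hP) hQ,
      mul_pos (mul_pos hP hQ) hQ, hP.le, hQ.le]

set_option maxHeartbeats 1600000 in
/-- For `λ > 0` and `L = sinh λ`, the depressed cubic
`Z³ − (2L² + (10/3)L⁴)Z − (25/27)L⁶ − (1/3)L⁴` has positive discriminant, hence three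
distinct real roots, and exactly two of the three values `Z_k + (5/3)L²` are positive. -/
theorem stmt17 (l : ℝ) (hl : 0 < l) :
    let L : ℝ := Real.sinh l
    let p : ℝ := -(2 * L ^ 2 + (10 / 3) * L ^ 4)
    let q : ℝ := -(25 / 27) * L ^ 6 - (1 / 3) * L ^ 4
    0 < -4 * p ^ 3 - 27 * q ^ 2 ∧
    ∃ z1 z2 z3 : ℝ, z1 < z2 ∧ z2 < z3 ∧
      (∀ z : ℝ, z ^ 3 + p * z + q = 0 ↔ z = z1 ∨ z = z2 ∨ z = z3) ∧
      z1 + (5 / 3) * L ^ 2 < 0 ∧ 0 < z2 + (5 / 3) * L ^ 2 ∧ 0 < z3 + (5 / 3) * L ^ 2 := by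
  intro L p q
  have hL : 0 < L := Real.sinh_pos_iff.mpr hl
  have hpdef : p = -(2 * L ^ 2 + (10 / 3) * L ^ 4) := rfl
  have hqdef : q = -((25 / 27) * L ^ 6 + (1 / 3) * L ^ 4) := by
    show -(25 / 27) * L ^ 6 - (1 / 3) * L ^ 4 = _; ring
  -- discriminant
  have hdisc : 0 < -4 * p ^ 3 - 27 * q ^ 2 := by
    have h : -4 * p ^ 3 - 27 * q ^ 2 =
        32 * L ^ 6 + 157 * L ^ 8 + 250 * L ^ 10 + 125 * L ^ 12 := by
      rw [hpdef, hqdef]; ring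
    rw [h]; positivity
  refine ⟨hdisc, ?_⟩
  have hP : 0 < 2 * L ^ 2 + (10 / 3) * L ^ 4 := by positivity
  have hQ : 0 < (25 / 27) * L ^ 6 + (1 / 3) * L ^ 4 := by positivity
  set f : ℝ → ℝ := fun z => z ^ 3 + p * z + q with hf
  have hcont : Continuous f := by fun_prop
  set m : ℝ := -(5 / 3) * L ^ 2 with hm
  set K : ℝ := 1 + (2 * L ^ 2 + (10 / 3) * L ^ 4) + ((25 / 27) * L ^ 6 + (1 / 3) * L ^ 4)
    with hK
  obtain ⟨hneg, hpos⟩ := cubic_bounds _ _ hP hQ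
  have hK1 : 1 ≤ K := by rw [hK]; linarith
  have hfm : f m = 3 * L ^ 4 := by
    show m ^ 3 + p * m + q = 3 * L ^ 4
    rw [hpdef, hqdef, hm]; ring
  have hfm' : 0 < f m := by rw [hfm]; positivity
  have hf0 : f 0 < 0 := by
    show 0 ^ 3 + p * 0 + q < 0
    rw [hqdef]; nlinarith [hQ]
  have hfnK : f (-K) < 0 := by
    show (-K) ^ 3 + p * (-K) + q < 0
    rw [hpdef, hqdef, hK]; convert hneg using 2 <;> ring
  have hfK : 0 < f K := by
    show 0 < K ^ 3 + p * K + q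
    rw [hpdef, hqdef, hK]; convert hpos using 2 <;> ring
  have hmneg : m < 0 := by rw [hm]; nlinarith [pow_pos hL 2]
  have hKm : -K < m := by
    rw [hm, hK]; nlinarith [pow_pos hL 4, pow_pos hL 6, pow_pos hL 2]
  have h0K : (0 : ℝ) < K := lt_of_lt_of_le one_pos hK1
  -- three roots by IVT
  obtain ⟨z1, hz1mem, hz1⟩ : ∃ z ∈ Set.Ioo (-K) m, f z = 0 := by
    obtain ⟨z, hz, hfz⟩ := intermediate_value_Ioo (le_of_lt hKm) hcont.continuousOn
      (Set.mem_Ioo.mpr ⟨hfnK, hfm'⟩)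
    exact ⟨z, hz, hfz⟩
  obtain ⟨z2, hz2mem, hz2⟩ : ∃ z ∈ Set.Ioo m 0, f z = 0 := by
    obtain ⟨z, hz, hfz⟩ := intermediate_value_Ioo' (le_of_lt hmneg) hcont.continuousOn
      (Set.mem_Ioo.mpr ⟨hf0, hfm'⟩)
    exact ⟨z, hz, hfz⟩
  obtain ⟨z3, hz3mem, hz3⟩ : ∃ z ∈ Set.Ioo 0 K, f z = 0 := by
    obtain ⟨z, hz, hfz⟩ := intermediate_value_Ioo (le_of_lt h0K) hcont.continuousOn
      (Set.mem_Ioo.mpr ⟨hf0, hfK⟩)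
    exact ⟨z, hz, hfz⟩
  obtain ⟨hz1l, hz1r⟩ := hz1mem
  obtain ⟨hz2l, hz2r⟩ := hz2mem
  obtain ⟨hz3l, hz3r⟩ := hz3mem
  have h12 : z1 < z2 := lt_trans hz1r hz2l
  have h23 : z2 < z3 := lt_trans hz2r hz3l
  have hm' : m = -(5 / 3) * L ^ 2 := hm
  refine ⟨z1, z2, z3, h12, h23,
    cubic_root_iff p q z1 z2 z3 (ne_of_lt h12) (ne_of_lt (lt_trans h12 h23)) (ne_of_lt h23)
      hz1 hz2 hz3, ?_, ?_, ?_⟩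
  · rw [hm'] at hz1r; linarith
  · rw [hm'] at hz2l; linarith
  · nlinarith [hz3l, pow_pos hL 2]
end

section
/- Let λ > 0 and define, for y > λ, x^h(y) = (1/2)·arcsinh( cosh λ · sinh² y / √(sinh² y − sinh² λ) ). Then x^h is strictly decreasing on (λ, arcsinh(√2·sinh λ)] and strictly increasing on [arcsinh(√2·sinh λ), ∞), and x^h(y) → ∞ both as y → λ⁺ and as y → ∞. -/
/-!
With `s = √(sinh² y − sinh² λ)`, which increases strictly from `0` to `∞` as `y` runs over
`(λ, ∞)`, one has `sinh² y / s = s + sinh² λ / s`. Hence `x^h` is an increasing function of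
`s + sinh² λ / s`, which decreases for `s ≤ sinh λ`, increases for `s ≥ sinh λ`, and tends
to `∞` as `s → 0⁺` and as `s → ∞`. The turning point `s = sinh λ` is `sinh y = √2 sinh λ`.
-/

open Real Set Filter Topology

/-- Where `u ≤ b` both sides vanish, as `√(u - b) = 0`. -/
lemma div_sqrt_sub_eq (u b : ℝ) : u / √(u - b) = √(u - b) + b / √(u - b) := by
  rcases le_or_gt (u - b) 0 with h | h
  · simp [sqrt_eq_zero'.2 h]
  · have hs : 0 < √(u - b) := sqrt_pos.2 h
    field_simp
    rw [sq_sqrt h.le]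
    ring

lemma strictAntiOn_add_sq_div (c : ℝ) :
    StrictAntiOn (fun s : ℝ => s + c ^ 2 / s) (Ioc 0 c) := by
  rintro u ⟨hu, huc⟩ v ⟨hv, hvc⟩ huv
  have huv_lt : u * v < c ^ 2 := by nlinarith
  show v + c ^ 2 / v < u + c ^ 2 / u
  rw [add_div' _ _ _ hv.ne', add_div' _ _ _ hu.ne', div_lt_div_iff₀ hv hu]
  nlinarith [mul_pos (sub_pos.2 huv) (sub_pos.2 huv_lt)]

lemma strictMonoOn_add_sq_div {c : ℝ} (hc : 0 < c) :
    StrictMonoOn (fun s : ℝ => s + c ^ 2 / s) (Ici c) := by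
  rintro u (hcu : c ≤ u) v - huv
  have hu : 0 < u := hc.trans_le hcu
  have hv : 0 < v := hu.trans huv
  have huv_gt : c ^ 2 < u * v := by nlinarith
  show u + c ^ 2 / u < v + c ^ 2 / v
  rw [add_div' _ _ _ hv.ne', add_div' _ _ _ hu.ne', div_lt_div_iff₀ hu hv]
  nlinarith [mul_pos (sub_pos.2 huv) (sub_pos.2 huv_gt)]

lemma tendsto_add_div_nhdsGT_zero {b : ℝ} (hb : 0 < b) :
    Tendsto (fun s : ℝ => s + b / s) (𝓝[>] 0) atTop := by
  have hid : Tendsto (fun s : ℝ => s) (𝓝[>] 0) (𝓝 0) :=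
    tendsto_nhdsWithin_of_tendsto_nhds tendsto_id
  simpa only [div_eq_mul_inv] using hid.add_atTop (tendsto_inv_nhdsGT_zero.const_mul_atTop hb)

lemma tendsto_add_div_atTop (b : ℝ) : Tendsto (fun s : ℝ => s + b / s) atTop atTop :=
  tendsto_id.atTop_add (tendsto_const_nhds.div_atTop tendsto_id)

section SqrtSinhSqSub

variable {l : ℝ}

lemma strictMonoOn_sqrt_sinh_sq_sub (hl : 0 ≤ l) :
    StrictMonoOn (fun y => √(sinh y ^ 2 - sinh l ^ 2)) (Ici l) := by
  rintro y₁ (hy₁ : l ≤ y₁) y₂ - hy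
  have h₀ : 0 ≤ sinh l := sinh_nonneg_iff.2 hl
  have h₁ : sinh l ≤ sinh y₁ := sinh_le_sinh.2 hy₁
  have h₂ : sinh y₁ < sinh y₂ := sinh_lt_sinh.2 hy
  exact sqrt_lt_sqrt (by nlinarith) (by nlinarith)

lemma tendsto_sqrt_sinh_sq_sub_nhdsGT (hl : 0 ≤ l) :
    Tendsto (fun y => √(sinh y ^ 2 - sinh l ^ 2)) (𝓝[>] l) (𝓝[>] 0) := by
  refine tendsto_nhdsWithin_iff.2 ⟨?_, ?_⟩
  · have hcont : Continuous fun y => √(sinh y ^ 2 - sinh l ^ 2) := by fun_prop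
    simpa using tendsto_nhdsWithin_of_tendsto_nhds (hcont.tendsto l)
  · filter_upwards [self_mem_nhdsWithin] with y (hy : l < y)
    simpa using strictMonoOn_sqrt_sinh_sq_sub hl self_mem_Ici hy.le hy

lemma tendsto_sqrt_sinh_sq_sub_atTop (l : ℝ) :
    Tendsto (fun y => √(sinh y ^ 2 - sinh l ^ 2)) atTop atTop :=
  tendsto_sqrt_atTop.comp <| tendsto_atTop_add_const_right _ _ <|
    (tendsto_pow_atTop two_ne_zero).comp sinhOrderIso.tendsto_atTop

lemma sqrt_sinh_sq_sub_arsinh (hl : 0 ≤ l) :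
    √(sinh (arsinh (√2 * sinh l)) ^ 2 - sinh l ^ 2) = sinh l := by
  rw [sinh_arsinh, mul_pow, sq_sqrt zero_le_two, two_mul, add_sub_cancel_right,
    sqrt_sq (sinh_nonneg_iff.2 hl)]

end SqrtSinhSqSub

section HalfArsinhMul

variable {k : ℝ}

lemma strictMono_half_arsinh_mul (hk : 0 < k) : StrictMono fun t => 1 / 2 * arsinh (k * t) :=
  fun _ _ h => mul_lt_mul_of_pos_left (arsinh_strictMono (mul_lt_mul_of_pos_left h hk)) one_half_pos

lemma tendsto_half_arsinh_mul_atTop (hk : 0 < k) :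
    Tendsto (fun t => 1 / 2 * arsinh (k * t)) atTop atTop :=
  (sinhOrderIso.symm.tendsto_atTop.comp (tendsto_id.const_mul_atTop hk)).const_mul_atTop
    one_half_pos

end HalfArsinhMul

/-- Monotonicity and limiting behaviour of the function `x^h` from the paper. -/
theorem stmt18 (l : ℝ) (hl : 0 < l) :
    let xh : ℝ → ℝ := fun y =>
      (1 / 2) * Real.arsinh (Real.cosh l * Real.sinh y ^ 2 /
        Real.sqrt (Real.sinh y ^ 2 - Real.sinh l ^ 2))
    StrictAntiOn xh (Ioc l (Real.arsinh (Real.sqrt 2 * Real.sinh l))) ∧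
    StrictMonoOn xh (Ici (Real.arsinh (Real.sqrt 2 * Real.sinh l))) ∧
    Tendsto xh (nhdsWithin l (Ioi l)) atTop ∧
    Tendsto xh atTop atTop := by
  intro xh
  set S : ℝ → ℝ := fun y => √(sinh y ^ 2 - sinh l ^ 2)
  set F : ℝ → ℝ := fun t => 1 / 2 * arsinh (cosh l * t)
  have hxh : xh = F ∘ (fun s => s + sinh l ^ 2 / s) ∘ S := funext fun y => by
    simp only [xh, F, S, Function.comp_apply, mul_div_assoc, div_sqrt_sub_eq]
  have hsinh : 0 < sinh l := sinh_pos_iff.2 hl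
  set y₀ := arsinh (√2 * sinh l)
  have hS_y₀ : S y₀ = sinh l := sqrt_sinh_sq_sub_arsinh hl.le
  have hS := strictMonoOn_sqrt_sinh_sq_sub hl.le
  have hl_y₀ : l < y₀ := calc
    l = arsinh (sinh l) := (arsinh_sinh l).symm
    _ < y₀ := arsinh_lt_arsinh.2 (lt_mul_of_one_lt_left hsinh one_lt_sqrt_two)
  have hF := strictMono_half_arsinh_mul (cosh_pos l)
  have hF_atTop := tendsto_half_arsinh_mul_atTop (cosh_pos l)
  rw [hxh]
  refine ⟨hF.comp_strictAntiOn ?_, hF.comp_strictMonoOn ?_, ?_, ?_⟩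
  · refine (strictAntiOn_add_sq_div _).comp_strictMonoOn
      (hS.mono (Ioc_subset_Ioi_self.trans Ioi_subset_Ici_self)) ?_
    rintro y ⟨hly, hyy₀⟩
    refine ⟨?_, hS_y₀ ▸ hS.monotoneOn hly.le hl_y₀.le hyy₀⟩
    simpa [S] using hS self_mem_Ici hly.le hly
  · refine (strictMonoOn_add_sq_div hsinh).comp (hS.mono (Ici_subset_Ici.2 hl_y₀.le)) ?_
    intro y (hy : y₀ ≤ y)
    exact hS_y₀ ▸ hS.monotoneOn hl_y₀.le (hl_y₀.le.trans hy) hy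
  · exact hF_atTop.comp <| (tendsto_add_div_nhdsGT_zero (pow_pos hsinh 2)).comp
      (tendsto_sqrt_sinh_sq_sub_nhdsGT hl.le)
  · exact hF_atTop.comp <| (tendsto_add_div_atTop _).comp (tendsto_sqrt_sinh_sq_sub_atTop l)
end
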